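/- arXiv:2006.14288 — 11 statements merged into one kernel-verified Lean document; each statement's English description precedes it below -/
import Mathlib

section
/- Let Ω be a Polish space, g₁,…,gₘ : Ω → ℝ Borel measurable, and π̲ⱼ ≤ π̄ⱼ real numbers for j = 1,…,m. Define π(y) = Σⱼ (yⱼ⁺ π̄ⱼ − yⱼ⁻ π̲ⱼ). Consider the no-arbitrage assumption: for all y ∈ ℝᵐ, if ⟨y, g(ω)⟩ − π(y) ≥ 0 for all ω ∈ Ω, then ⟨y, g(ω)⟩ − π(y) = 0 for all ω ∈ Ω. If this assumption fails, then there exists ω ∈ Ω such that μ({ω}) = 0 for every Borel probability measure μ on Ω satisfying π̲ⱼ ≤ ∫ gⱼ dμ ≤ π̄ⱼ for all j. -/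
open MeasureTheory

/-- Price functional π(y) = Σⱼ (yⱼ⁺ π̄ⱼ − yⱼ⁻ π̲ⱼ). -/
noncomputable def priceFn {m : ℕ} (pilo pihi : Fin m → ℝ) (y : Fin m → ℝ) : ℝ :=
  ∑ j, (max (y j) 0 * pihi j - max (-(y j)) 0 * pilo j)

/-- If the no-arbitrage assumption fails, there is a point ω to which every pricing
measure (probability measure consistent with the bid–ask prices) assigns zero mass. -/
theorem stmt0 {Ω : Type*} [TopologicalSpace Ω] [PolishSpace Ω]
    [MeasurableSpace Ω] [BorelSpace Ω]
    (m : ℕ) (g : Fin m → Ω → ℝ) (hg : ∀ j, Measurable (g j))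
    (pilo pihi : Fin m → ℝ) (hple : ∀ j, pilo j ≤ pihi j)
    (hNA : ¬ (∀ y : Fin m → ℝ,
        (∀ ω, 0 ≤ (∑ j, y j * g j ω) - priceFn pilo pihi y) →
        (∀ ω, (∑ j, y j * g j ω) - priceFn pilo pihi y = 0))) :
    ∃ ω : Ω, ∀ μ : Measure Ω, IsProbabilityMeasure μ →
      (∀ j, Integrable (g j) μ) →
      (∀ j, pilo j ≤ ∫ x, g j x ∂μ ∧ ∫ x, g j x ∂μ ≤ pihi j) →
      μ {ω} = 0 := by
  push_neg at hNA
  obtain ⟨y, hnn, ω₀, hω₀⟩ := hNA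
  refine ⟨ω₀, fun μ hμ hint hbd => ?_⟩
  set c := priceFn pilo pihi y with hc
  have hsum : Integrable (fun ω => ∑ j, y j * g j ω) μ :=
    integrable_finset_sum _ (fun j _ => (hint j).const_mul (y j))
  have hfint : Integrable (fun ω => (∑ j, y j * g j ω) - c) μ :=
    hsum.sub (integrable_const c)
  have hI : ∫ ω, ((∑ j, y j * g j ω) - c) ∂μ ≤ 0 := by
    rw [integral_sub hsum (integrable_const c),
      integral_finset_sum _ (fun j _ => (hint j).const_mul (y j)), integral_const]
    simp only [measure_univ, probReal_univ, ENNReal.toReal_one, one_smul, integral_const_mul]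
    rw [sub_nonpos, hc, priceFn]
    refine Finset.sum_le_sum fun j _ => ?_
    obtain ⟨h1, h2⟩ := hbd j
    have hm1 : (0:ℝ) ≤ max (y j) 0 := le_max_right _ _
    have hm2 : (0:ℝ) ≤ max (-(y j)) 0 := le_max_right _ _
    have hy : max (y j) 0 - max (-(y j)) 0 = y j := by
      rcases le_total (y j) 0 with h | h
      · rw [max_eq_right h, max_eq_left (by linarith)]; ring
      · rw [max_eq_left h, max_eq_right (by linarith)]; ring
    have hy' : y j * ∫ x, g j x ∂μ =
        max (y j) 0 * ∫ x, g j x ∂μ - max (-(y j)) 0 * ∫ x, g j x ∂μ := by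
      linear_combination (-(∫ x, g j x ∂μ)) * hy
    nlinarith [mul_nonneg hm1 (sub_nonneg.mpr h2), mul_nonneg hm2 (sub_nonneg.mpr h1)]
  have hInn : (0:ℝ) ≤ ∫ ω, ((∑ j, y j * g j ω) - c) ∂μ :=
    integral_nonneg hnn
  have hzero : (fun ω => (∑ j, y j * g j ω) - c) =ᵐ[μ] 0 :=
    (integral_eq_zero_iff_of_nonneg hnn hfint).mp (le_antisymm hI hInn)
  have hnull : μ {ω | ¬ ((∑ j, y j * g j ω) - c = 0)} = 0 := by
    have := hzero
    rw [Filter.EventuallyEq, ae_iff] at this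
    exact this
  exact measure_mono_null (fun x hx => by simp_all [Set.mem_singleton_iff.mp hx]) hnull
end

section
/- Let h : ℝ₊ᵈ → ℝ be a CPWA function h(x) = Σₖ ξₖ max{⟨a_{k,i},x⟩ + b_{k,i} : 1 ≤ i ≤ Iₖ} and let h̃(z) = Σₖ ξₖ max{⟨a_{k,i},z⟩ : 1 ≤ i ≤ Iₖ} be its radial function. Then inf over x ∈ ℝ₊ᵈ of h(x) is finite (i.e., > −∞) if and only if h̃(z) ≥ 0 for all z ∈ ℝ₊ᵈ. -/
lemma sup'_mul_const {n : ℕ} (t : ℝ) (ht : 0 ≤ t) (f : Fin (n+1) → ℝ) :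
    Finset.univ.sup' Finset.univ_nonempty (fun i => t * f i)
      = t * Finset.univ.sup' Finset.univ_nonempty f := by
  apply le_antisymm
  · apply Finset.sup'_le
    intro i _
    exact mul_le_mul_of_nonneg_left (Finset.le_sup' f (Finset.mem_univ i)) ht
  · obtain ⟨i, _, hi⟩ := Finset.exists_mem_eq_sup' (Finset.univ_nonempty) f
    rw [hi]
    exact Finset.le_sup' (fun i => t * f i) (Finset.mem_univ i)

lemma abs_sup'_sub {n : ℕ} (f g : Fin (n+1) → ℝ) :
    |Finset.univ.sup' Finset.univ_nonempty (fun i => f i + g i)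
      - Finset.univ.sup' Finset.univ_nonempty f|
      ≤ Finset.univ.sup' Finset.univ_nonempty (fun i => |g i|) := by
  rw [abs_sub_le_iff]
  constructor
  · rw [sub_le_iff_le_add]
    apply Finset.sup'_le
    intro i _
    have h1 : f i ≤ Finset.univ.sup' Finset.univ_nonempty f :=
      Finset.le_sup' f (Finset.mem_univ i)
    have h2 : g i ≤ |g i| := le_abs_self _
    have h3 : |g i| ≤ Finset.univ.sup' Finset.univ_nonempty (fun i => |g i|) :=
      Finset.le_sup' (fun i => |g i|) (Finset.mem_univ i)
    linarith
  · rw [sub_le_iff_le_add]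
    apply Finset.sup'_le
    intro i _
    have h1 : f i + g i ≤ Finset.univ.sup' Finset.univ_nonempty (fun i => f i + g i) :=
      Finset.le_sup' (fun i => f i + g i) (Finset.mem_univ i)
    have h2 : -|g i| ≤ g i := neg_abs_le _
    have h3 : |g i| ≤ Finset.univ.sup' Finset.univ_nonempty (fun i => |g i|) :=
      Finset.le_sup' (fun i => |g i|) (Finset.mem_univ i)
    linarith

/-- A CPWA function is bounded below on the nonnegative orthant if and only if its
radial function is nonnegative on the nonnegative orthant. -/
theorem stmt6 {d K : ℕ} (I : Fin K → ℕ) (ξ : Fin K → ℝ)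
    (a : (k : Fin K) → Fin (I k + 1) → Fin d → ℝ)
    (b : (k : Fin K) → Fin (I k + 1) → ℝ)
    (hξ : ∀ k, ξ k = 1 ∨ ξ k = -1) :
    (∃ M : ℝ, ∀ x : Fin d → ℝ, (∀ j, 0 ≤ x j) →
        M ≤ ∑ k, ξ k * (Finset.univ.sup' Finset.univ_nonempty
          fun i => (∑ j, a k i j * x j) + b k i)) ↔
    (∀ z : Fin d → ℝ, (∀ j, 0 ≤ z j) →
        0 ≤ ∑ k, ξ k * (Finset.univ.sup' Finset.univ_nonempty
          fun i => ∑ j, a k i j * z j)) := by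
  set S : Fin K → (Fin d → ℝ) → ℝ := fun k x =>
    Finset.univ.sup' Finset.univ_nonempty fun i => (∑ j, a k i j * x j) + b k i with hS
  set T : Fin K → (Fin d → ℝ) → ℝ := fun k x =>
    Finset.univ.sup' Finset.univ_nonempty fun i => ∑ j, a k i j * x j with hT
  set C : ℝ := ∑ k, Finset.univ.sup' Finset.univ_nonempty (fun i => |b k i|) with hC
  have hxi1 : ∀ k, |ξ k| = 1 := by
    intro k; rcases hξ k with h | h <;> rw [h] <;> norm_num
  have hdiff : ∀ x : Fin d → ℝ,
      |(∑ k, ξ k * S k x) - (∑ k, ξ k * T k x)| ≤ C := by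
    intro x
    rw [← Finset.sum_sub_distrib]
    refine (Finset.abs_sum_le_sum_abs _ _).trans ?_
    rw [hC]
    apply Finset.sum_le_sum
    intro k _
    have : ξ k * S k x - ξ k * T k x = ξ k * (S k x - T k x) := by ring
    rw [this, abs_mul, hxi1 k, one_mul]
    exact abs_sup'_sub _ _
  have hhom : ∀ (k : Fin K) (t : ℝ) (_ : 0 ≤ t) (z : Fin d → ℝ),
      T k (fun j => t * z j) = t * T k z := by
    intro k t ht z
    rw [hT]
    simp only
    have : (fun i => ∑ j, a k i j * (t * z j)) = fun i => t * ∑ j, a k i j * z j := by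
      funext i
      rw [Finset.mul_sum]
      congr 1; funext j; ring
    rw [this, sup'_mul_const t ht]
  constructor
  · rintro ⟨M, hM⟩ z hz
    by_contra hneg
    push_neg at hneg
    set s : ℝ := -(∑ k, ξ k * T k z) with hs
    have hspos : 0 < s := by rw [hs]; linarith
    set t : ℝ := max 1 ((C - M) / s + 1) with htdef
    have ht0 : (0:ℝ) ≤ t := le_trans zero_le_one (le_max_left _ _)
    have htbig : (C - M) / s < t := lt_of_lt_of_le (lt_add_one _) (le_max_right _ _)
    have hts : C - M < t * s := by
      rw [div_lt_iff₀ hspos] at htbig; linarith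
    have hx : ∀ j, 0 ≤ t * z j := fun j => mul_nonneg ht0 (hz j)
    have h1 := hM (fun j => t * z j) hx
    have h2 := hdiff (fun j => t * z j)
    have h3 : (∑ k, ξ k * T k (fun j => t * z j)) = t * ∑ k, ξ k * T k z := by
      rw [Finset.mul_sum]
      apply Finset.sum_congr rfl
      intro k _
      rw [hhom k t ht0 z]; ring
    have h4 : (∑ k, ξ k * S k (fun j => t * z j))
        ≤ (∑ k, ξ k * T k (fun j => t * z j)) + C := by
      have := abs_sub_le_iff.mp h2
      linarith [this.1]
    rw [h3] at h4
    have h5 : t * ∑ k, ξ k * T k z = -(t * s) := by rw [hs]; ring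
    rw [h5] at h4
    linarith
  · intro hpos
    refine ⟨-C, fun x hx => ?_⟩
    have h2 := hdiff x
    have h3 := hpos x hx
    have := abs_sub_le_iff.mp h2
    linarith [this.1]
end

section
/- Let h : ℝ₊ᵈ → ℝ be a CPWA function. If inf_{x ∈ ℝ₊ᵈ} h(x) > −∞, then the infimum is attained: there exists x* ∈ ℝ₊ᵈ with h(x*) = inf_{x ∈ ℝ₊ᵈ} h(x). -/
namespace Stmt7Aux

/-- An affine constraint `0 ≤ ⟨c.1, x⟩ + c.2`. -/
abbrev Cst (d : ℕ) := (Fin d → ℝ) × ℝ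

noncomputable def ev {d : ℕ} (c : Cst d) (x : Fin d → ℝ) : ℝ := (∑ j, c.1 j * x j) + c.2

def Sol {d : ℕ} (F : Finset (Cst d)) (x : Fin d → ℝ) : Prop := ∀ c ∈ F, 0 ≤ ev c x

/-- Drop the last coordinate of a constraint. -/
noncomputable def vmap {d : ℕ} (c : Cst (d + 1)) : Cst d :=
  (fun j => c.1 (Fin.castSucc j), c.2)

/-- Fourier–Motzkin combination of a constraint with positive last coefficient and one with
negative last coefficient. -/
noncomputable def cross {d : ℕ} (c c' : Cst (d + 1)) : Cst d :=
  (fun j => c.1 (Fin.last d) * c'.1 (Fin.castSucc j) - c'.1 (Fin.last d) * c.1 (Fin.castSucc j),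
   c.1 (Fin.last d) * c'.2 - c'.1 (Fin.last d) * c.2)

lemma ev_snoc {d : ℕ} (c : Cst (d + 1)) (x : Fin d → ℝ) (t : ℝ) :
    ev c (Fin.snoc x t) = ev (vmap c) x + c.1 (Fin.last d) * t := by
  simp only [ev, vmap, Fin.sum_univ_castSucc, Fin.snoc_castSucc, Fin.snoc_last]
  ring

lemma ev_cross {d : ℕ} (c c' : Cst (d + 1)) (x : Fin d → ℝ) :
    ev (cross c c') x = c.1 (Fin.last d) * ev (vmap c') x
      - c'.1 (Fin.last d) * ev (vmap c) x := by
  simp only [ev, cross, vmap, mul_add, Finset.mul_sum, sub_mul, Finset.sum_sub_distrib,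
    mul_assoc]
  ring

/-- Fourier–Motzkin elimination of the last variable. -/
lemma fm {d : ℕ} (F : Finset (Cst (d + 1))) :
    ∃ G : Finset (Cst d), ∀ x : Fin d → ℝ, Sol G x ↔ ∃ t, Sol F (Fin.snoc x t) := by
  classical
  refine ⟨((F.filter fun c => c.1 (Fin.last d) = 0).image vmap) ∪
      (((F ×ˢ F).filter fun p =>
        0 < p.1.1 (Fin.last d) ∧ p.2.1 (Fin.last d) < 0).image fun p => cross p.1 p.2),
    fun x => ?_⟩
  constructor
  · intro hG
    have hz : ∀ c ∈ F, c.1 (Fin.last d) = 0 → 0 ≤ ev (vmap c) x := fun c hc h0 =>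
      hG _ (Finset.mem_union_left _ (Finset.mem_image_of_mem _ (Finset.mem_filter.2 ⟨hc, h0⟩)))
    have hcr : ∀ c ∈ F, ∀ c' ∈ F, 0 < c.1 (Fin.last d) → c'.1 (Fin.last d) < 0 →
        0 ≤ c.1 (Fin.last d) * ev (vmap c') x - c'.1 (Fin.last d) * ev (vmap c) x := by
      intro c hc c' hc' h1 h2
      have hmem : (c, c') ∈ (F ×ˢ F).filter fun p =>
          0 < p.1.1 (Fin.last d) ∧ p.2.1 (Fin.last d) < 0 := by
        rw [Finset.mem_filter]
        exact ⟨Finset.mem_product.2 ⟨hc, hc'⟩, h1, h2⟩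
      have := hG _ (Finset.mem_union_right _ (Finset.mem_image_of_mem _ hmem))
      simpa [ev_cross] using this
    set Fneg := F.filter fun c => c.1 (Fin.last d) < 0 with hFneg
    set Fpos := F.filter fun c => 0 < c.1 (Fin.last d) with hFpos
    have key : ∀ (t : ℝ), (∀ c ∈ Fpos, -(ev (vmap c) x) / c.1 (Fin.last d) ≤ t) →
        (∀ c ∈ Fneg, t ≤ -(ev (vmap c) x) / c.1 (Fin.last d)) → Sol F (Fin.snoc x t) := by
      intro t hlo hhi c hc
      rw [ev_snoc]
      rcases lt_trichotomy (c.1 (Fin.last d)) 0 with hα | hα | hα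
      · have h1 := hhi c (Finset.mem_filter.2 ⟨hc, hα⟩)
        have h2 : c.1 (Fin.last d) * (-(ev (vmap c) x) / c.1 (Fin.last d))
            ≤ c.1 (Fin.last d) * t := mul_le_mul_of_nonpos_left h1 hα.le
        rw [mul_div_cancel₀ _ hα.ne] at h2
        linarith
      · have := hz c hc hα
        rw [hα]; linarith
      · have h1 := hlo c (Finset.mem_filter.2 ⟨hc, hα⟩)
        have h2 : c.1 (Fin.last d) * (-(ev (vmap c) x) / c.1 (Fin.last d))
            ≤ c.1 (Fin.last d) * t := mul_le_mul_of_nonneg_left h1 hα.le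
        rw [mul_div_cancel₀ _ hα.ne'] at h2
        linarith
    by_cases hneg : Fneg.Nonempty
    · refine ⟨Fneg.inf' hneg fun c => -(ev (vmap c) x) / c.1 (Fin.last d), key _ ?_ ?_⟩
      · intro c hc
        refine Finset.le_inf' hneg _ fun c' hc' => ?_
        obtain ⟨hcF, hcα⟩ := Finset.mem_filter.1 hc
        obtain ⟨hc'F, hc'α⟩ := Finset.mem_filter.1 hc'
        have hcross := hcr c hcF c' hc'F hcα hc'α
        have h1 : -(ev (vmap c') x) / c'.1 (Fin.last d) = ev (vmap c') x / (-(c'.1 (Fin.last d))) := by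
          rw [div_neg, neg_div]
        rw [h1, div_le_div_iff₀ hcα (by linarith)]
        nlinarith
      · intro c hc
        exact Finset.inf'_le _ hc
    · by_cases hpos : Fpos.Nonempty
      · refine ⟨Fpos.sup' hpos fun c => -(ev (vmap c) x) / c.1 (Fin.last d), key _ ?_ ?_⟩
        · intro c hc
          exact Finset.le_sup' (fun c => -(ev (vmap c) x) / c.1 (Fin.last d)) hc
        · intro c hc; exact absurd ⟨c, hc⟩ hneg
      · refine ⟨0, key 0 ?_ ?_⟩
        · intro c hc; exact absurd ⟨c, hc⟩ hpos
        · intro c hc; exact absurd ⟨c, hc⟩ hneg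
  · rintro ⟨t, ht⟩ c hc
    rcases Finset.mem_union.1 hc with hc | hc
    · obtain ⟨c₀, hc₀, rfl⟩ := Finset.mem_image.1 hc
      obtain ⟨hc₀F, hα⟩ := Finset.mem_filter.1 hc₀
      have := ht c₀ hc₀F
      rw [ev_snoc, hα, zero_mul, add_zero] at this
      exact this
    · obtain ⟨p, hp, rfl⟩ := Finset.mem_image.1 hc
      obtain ⟨hpF, h1, h2⟩ := Finset.mem_filter.1 hp
      obtain ⟨hp1, hp2⟩ := Finset.mem_product.1 hpF
      have A := ht p.1 hp1
      have B := ht p.2 hp2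
      rw [ev_snoc] at A B
      rw [ev_cross]
      nlinarith [mul_nonneg h1.le B, mul_nonneg (neg_nonneg.2 h2.le) A]

/-- Iterated elimination: projection onto the first coordinate. -/
lemma proj : ∀ (d : ℕ) (F : Finset (Cst (d + 1))), ∃ G : Finset (ℝ × ℝ),
    ∀ t : ℝ, (∀ p ∈ G, 0 ≤ p.1 * t + p.2) ↔ ∃ x : Fin d → ℝ, Sol F (Fin.cons t x) := by
  intro d
  induction d with
  | zero =>
    intro F
    refine ⟨F.image fun c => (c.1 0, c.2), fun t => ?_⟩
    constructor
    · intro hp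
      refine ⟨Fin.elim0, fun c hc => ?_⟩
      have := hp (c.1 0, c.2) (Finset.mem_image_of_mem _ hc)
      simpa [ev, Fin.sum_univ_one] using this
    · rintro ⟨x, hx⟩ p hp
      obtain ⟨c, hc, rfl⟩ := Finset.mem_image.1 hp
      have := hx c hc
      simpa [ev, Fin.sum_univ_one] using this
  | succ d ih =>
    intro F
    obtain ⟨F₁, hF₁⟩ := fm F
    obtain ⟨G, hG⟩ := ih F₁
    refine ⟨G, fun t => ?_⟩
    rw [hG]
    constructor
    · rintro ⟨x, hx⟩
      obtain ⟨s, hs⟩ := (hF₁ _).1 hx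
      rw [← Fin.cons_snoc_eq_snoc_cons] at hs
      exact ⟨_, hs⟩
    · rintro ⟨x', hx'⟩
      refine ⟨fun j => x' (Fin.castSucc j), (hF₁ _).2 ⟨x' (Fin.last d), ?_⟩⟩
      rw [← Fin.cons_snoc_eq_snoc_cons]
      have : Fin.snoc (fun j => x' (Fin.castSucc j)) (x' (Fin.last d)) = x' :=
        Fin.snoc_init_self x'
      rwa [this]

lemma ev_cons {d : ℕ} (α : ℝ) (cv : Fin d → ℝ) (γ t : ℝ) (x : Fin d → ℝ) :
    ev (Fin.cons α cv, γ) (Fin.cons t x) = α * t + ((∑ j, cv j * x j) + γ) := by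
  simp only [ev, Fin.sum_univ_succ, Fin.cons_zero, Fin.cons_succ]
  ring

/-- Linear programming: an affine function bounded below on a nonempty polyhedron
attains its infimum. -/
lemma lp_min {d : ℕ} (F : Finset (Cst d)) (w : Fin d → ℝ) (β M : ℝ)
    (hne : ∃ x, Sol F x) (hbd : ∀ x, Sol F x → M ≤ (∑ j, w j * x j) + β) :
    ∃ x, Sol F x ∧ ∀ y, Sol F y →
      (∑ j, w j * x j) + β ≤ (∑ j, w j * y j) + β := by
  classical
  set obj : Cst (d + 1) := (Fin.cons 1 fun j => -w j, -β) with hobj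
  set F' : Finset (Cst (d + 1)) :=
    insert obj (F.image fun c => (Fin.cons 0 c.1, c.2)) with hF'
  have hsol : ∀ (t : ℝ) (x : Fin d → ℝ),
      Sol F' (Fin.cons t x) ↔ Sol F x ∧ (∑ j, w j * x j) + β ≤ t := by
    intro t x
    constructor
    · intro hs
      refine ⟨fun c hc => ?_, ?_⟩
      · have := hs _ (Finset.mem_insert_of_mem (Finset.mem_image_of_mem _ hc))
        rw [ev_cons] at this
        simpa [ev] using this
      · have := hs obj (Finset.mem_insert_self _ _)
        rw [hobj, ev_cons] at this
        have h2 : (∑ j, -w j * x j) = -(∑ j, w j * x j) := by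
          rw [← Finset.sum_neg_distrib]; exact Finset.sum_congr rfl fun j _ => by ring
        rw [h2] at this
        linarith
    · rintro ⟨hx, hle⟩ c hc
      rcases Finset.mem_insert.1 hc with rfl | hc
      · rw [hobj, ev_cons]
        have h2 : (∑ j, -w j * x j) = -(∑ j, w j * x j) := by
          rw [← Finset.sum_neg_distrib]; exact Finset.sum_congr rfl fun j _ => by ring
        rw [h2]
        linarith
      · obtain ⟨c₀, hc₀, rfl⟩ := Finset.mem_image.1 hc
        rw [ev_cons]
        have := hx c₀ hc₀
        simpa [ev] using this
  obtain ⟨G, hG⟩ := proj d F'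
  set T : Set ℝ := {t | ∀ p ∈ G, 0 ≤ p.1 * t + p.2} with hT
  have hTiff : ∀ t, t ∈ T ↔ ∃ x, Sol F x ∧ (∑ j, w j * x j) + β ≤ t := by
    intro t
    rw [hT, Set.mem_setOf_eq, hG]
    constructor
    · rintro ⟨x, hx⟩; exact ⟨x, (hsol t x).1 hx⟩
    · rintro ⟨x, hx⟩; exact ⟨x, (hsol t x).2 hx⟩
  have hTclosed : IsClosed T := by
    have : T = ⋂ p ∈ G, {t : ℝ | 0 ≤ p.1 * t + p.2} := by
      ext t; simp [hT, Set.mem_iInter]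
    rw [this]
    exact isClosed_biInter fun p _ =>
      isClosed_le continuous_const (by fun_prop)
  have hTne : T.Nonempty := by
    obtain ⟨x₀, hx₀⟩ := hne
    exact ⟨_, (hTiff _).2 ⟨x₀, hx₀, le_refl _⟩⟩
  have hTbdd : BddBelow T := by
    refine ⟨M, fun t ht => ?_⟩
    obtain ⟨x, hx, hle⟩ := (hTiff t).1 ht
    exact le_trans (hbd x hx) hle
  have hmem := hTclosed.csInf_mem hTne hTbdd
  obtain ⟨x, hx, hle⟩ := (hTiff _).1 hmem
  refine ⟨x, hx, fun y hy => ?_⟩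
  have hyT : (∑ j, w j * y j) + β ∈ T := (hTiff _).2 ⟨y, hy, le_refl _⟩
  exact le_trans hle (csInf_le hTbdd hyT)

end Stmt7Aux

def IsCPWA {d : ℕ} (h : (Fin d → ℝ) → ℝ) : Prop :=
  ∃ (K : ℕ) (I : Fin K → ℕ) (ξ : Fin K → ℝ)
    (a : (k : Fin K) → Fin (I k + 1) → Fin d → ℝ)
    (b : (k : Fin K) → Fin (I k + 1) → ℝ),
    (∀ k, ξ k = 1 ∨ ξ k = -1) ∧
    ∀ x, h x = ∑ k, ξ k *
      (Finset.univ.sup' Finset.univ_nonempty fun i => (∑ j, a k i j * x j) + b k i)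

/-- If a CPWA function is bounded below on the nonnegative orthant, its infimum
over the orthant is attained. -/
theorem stmt7 {d : ℕ} (h : (Fin d → ℝ) → ℝ) (hcpwa : IsCPWA h)
    (hbdd : ∃ M : ℝ, ∀ x : Fin d → ℝ, (∀ j, 0 ≤ x j) → M ≤ h x) :
    ∃ xs : Fin d → ℝ, (∀ j, 0 ≤ xs j) ∧
      ∀ x : Fin d → ℝ, (∀ j, 0 ≤ x j) → h xs ≤ h x := by
  classical
  open Stmt7Aux in
  obtain ⟨K, I, ξ, a, b, -, hrep⟩ := hcpwa
  obtain ⟨M, hM⟩ := hbdd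
  -- the polyhedral cell associated to a choice of argmax indices
  set cellF : (∀ k, Fin (I k + 1)) → Finset (Cst d) := fun σ =>
    (Finset.univ.image fun j : Fin d => ((Pi.single j (1:ℝ)), (0:ℝ))) ∪
    (Finset.univ.image fun p : (k : Fin K) × Fin (I k + 1) =>
      ((fun j => a p.1 (σ p.1) j - a p.1 p.2 j), b p.1 (σ p.1) - b p.1 p.2)) with hcellF
  have sol_iff : ∀ (σ : ∀ k, Fin (I k + 1)) (x : Fin d → ℝ), Sol (cellF σ) x ↔ ((∀ j, 0 ≤ x j) ∧ ∀ (k : Fin K) (i : Fin (I k + 1)),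
      (∑ j, a k i j * x j) + b k i ≤ (∑ j, a k (σ k) j * x j) + b k (σ k)) := by
    intro σ x
    have hsingle : ∀ j : Fin d, ev ((Pi.single j (1:ℝ)), (0:ℝ)) x = x j := by
      intro j
      simp [ev, Pi.single_apply, ite_mul, Finset.sum_ite_eq]
    have hdiff : ∀ (k : Fin K) (i : Fin (I k + 1)),
        ev ((fun j => a k (σ k) j - a k i j, b k (σ k) - b k i) : Cst d) x =
          ((∑ j, a k (σ k) j * x j) + b k (σ k)) - ((∑ j, a k i j * x j) + b k i) := by
      intro k i
      simp only [ev, sub_mul, Finset.sum_sub_distrib]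
      ring
    constructor
    · intro hs
      constructor
      · intro j
        have := hs _ (Finset.mem_union_left _ (Finset.mem_image_of_mem _ (Finset.mem_univ j)))
        rwa [hsingle] at this
      · intro k i
        have := hs _ (Finset.mem_union_right _ (Finset.mem_image_of_mem _
          (Finset.mem_univ (⟨k, i⟩ : (k : Fin K) × Fin (I k + 1)))))
        rw [hdiff] at this
        linarith
    · rintro ⟨h1, h2⟩ c hc
      rcases Finset.mem_union.1 hc with hc | hc
      · obtain ⟨j, -, rfl⟩ := Finset.mem_image.1 hc
        rw [hsingle]; exact h1 j
      · obtain ⟨p, -, rfl⟩ := Finset.mem_image.1 hc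
        rw [hdiff]
        have := h2 p.1 p.2
        linarith
  -- on a cell, h is given by the affine function of the selected pieces
  have hval : ∀ (σ : ∀ k, Fin (I k + 1)) (x : Fin d → ℝ), Sol (cellF σ) x →
      h x = ∑ k, ξ k * ((∑ j, a k (σ k) j * x j) + b k (σ k)) := by
    intro σ x hx
    rw [hrep x]
    refine Finset.sum_congr rfl fun k _ => ?_
    congr 1
    refine le_antisymm (Finset.sup'_le _ _ fun i _ => ((sol_iff σ x).1 hx).2 k i)
      (Finset.le_sup' (fun i => (∑ j, a k i j * x j) + b k i) (Finset.mem_univ (σ k)))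
  -- the affine function as an explicit LP objective
  have hobj : ∀ (σ : ∀ k, Fin (I k + 1)) (x : Fin d → ℝ),
      (∑ j, (∑ k, ξ k * a k (σ k) j) * x j) + (∑ k, ξ k * b k (σ k)) =
      ∑ k, ξ k * ((∑ j, a k (σ k) j * x j) + b k (σ k)) := by
    intro σ x
    have h1 : (∑ j, (∑ k, ξ k * a k (σ k) j) * x j) =
        ∑ k, ξ k * (∑ j, a k (σ k) j * x j) := by
      simp_rw [Finset.sum_mul, Finset.mul_sum]
      rw [Finset.sum_comm]
      exact Finset.sum_congr rfl fun k _ => Finset.sum_congr rfl fun j _ => by ring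
    rw [h1, ← Finset.sum_add_distrib]
    exact Finset.sum_congr rfl fun k _ => by ring
  -- every point of the orthant belongs to some cell
  have hcover : ∀ x : Fin d → ℝ, (∀ j, 0 ≤ x j) → ∃ σ, Sol (cellF σ) x := by
    intro x hx
    have hsup := fun k : Fin K => Finset.exists_mem_eq_sup' Finset.univ_nonempty
      (fun i : Fin (I k + 1) => (∑ j, a k i j * x j) + b k i)
    choose σ hσmem hσ using hsup
    refine ⟨σ, (sol_iff σ x).2 ⟨hx, fun k i => ?_⟩⟩
    rw [← hσ k]
    exact Finset.le_sup' (fun i => (∑ j, a k i j * x j) + b k i) (Finset.mem_univ i)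
  -- minimize on each nonempty cell via LP attainment
  have key : ∀ (σ : ∀ k, Fin (I k + 1)), (∃ x, Sol (cellF σ) x) →
      ∃ x, Sol (cellF σ) x ∧ ∀ y, Sol (cellF σ) y → h x ≤ h y := by
    intro σ hσ
    have hbd : ∀ x, Sol (cellF σ) x →
        M ≤ (∑ j, (∑ k, ξ k * a k (σ k) j) * x j) + (∑ k, ξ k * b k (σ k)) := by
      intro x hx
      rw [hobj, ← hval σ x hx]
      exact hM x ((sol_iff σ x).1 hx).1
    obtain ⟨x, hx, hmin⟩ := lp_min (cellF σ) (fun j => ∑ k, ξ k * a k (σ k) j)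
      (∑ k, ξ k * b k (σ k)) M hσ hbd
    refine ⟨x, hx, fun y hy => ?_⟩
    have := hmin y hy
    rwa [hobj, hobj, ← hval σ x hx, ← hval σ y hy] at this
  choose! xm hxm1 hxm2 using key
  set A : Finset (∀ k, Fin (I k + 1)) :=
    Finset.univ.filter fun σ => ∃ x, Sol (cellF σ) x with hA
  have hAne : A.Nonempty := by
    obtain ⟨σ₀, hσ₀⟩ := hcover 0 fun j => le_refl 0
    exact ⟨σ₀, Finset.mem_filter.2 ⟨Finset.mem_univ _, 0, hσ₀⟩⟩
  obtain ⟨σs, hσsA, hσsmin⟩ := Finset.exists_min_image A (fun σ => h (xm σ)) hAne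
  have hσsne : ∃ x, Sol (cellF σs) x := (Finset.mem_filter.1 hσsA).2
  refine ⟨xm σs, ((sol_iff σs _).1 (hxm1 σs hσsne)).1, fun x hx => ?_⟩
  obtain ⟨σ, hσ⟩ := hcover x hx
  have hσA : σ ∈ A := Finset.mem_filter.2 ⟨Finset.mem_univ _, x, hσ⟩
  exact le_trans (hσsmin σ hσA) (hxm2 σ ⟨x, hσ⟩ x hσ)
end

section
/- Let h : ℝ₊ᵈ → ℝ be a CPWA function with radial function h̃, and fix x₀, z ∈ ℝ₊ᵈ. Then there exists t̄ > 0 and a constant c (depending on x₀, z, t̄) such that h(x₀ + t z) = c + (t − t̄)·h̃(z) for all t ≥ t̄. In particular, h is eventually affine along every ray within ℝ₊ᵈ with asymptotic slope h̃(z). -/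
/-- Finite max of affine functions of `t` is eventually affine in `t`. -/
lemma aff_sup {n : ℕ} (A B : Fin (n + 1) → ℝ) :
    ∃ T C : ℝ, ∀ t : ℝ, T ≤ t →
      (Finset.univ.sup' Finset.univ_nonempty fun i => A i + t * B i)
        = C + t * (Finset.univ.sup' Finset.univ_nonempty B) := by
  set M := Finset.univ.sup' Finset.univ_nonempty B with hM
  set S := Finset.univ.filter (fun i => B i = M) with hS
  have hSne : S.Nonempty := by
    obtain ⟨i, hi, hB⟩ := Finset.exists_mem_eq_sup' (Finset.univ_nonempty) B
    exact ⟨i, Finset.mem_filter.2 ⟨hi, hB.symm⟩⟩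
  set C := S.sup' hSne A with hC
  have hev : ∀ᶠ t in Filter.atTop, ∀ i : Fin (n + 1), A i + t * B i ≤ C + t * M := by
    rw [Filter.eventually_all]
    intro i
    by_cases hBi : B i = M
    · have hAi : A i ≤ C :=
        Finset.le_sup' A (Finset.mem_filter.2 ⟨Finset.mem_univ i, hBi⟩)
      filter_upwards with t
      rw [hBi]; linarith
    · have hBlt : B i < M :=
        lt_of_le_of_ne (Finset.le_sup' B (Finset.mem_univ i)) hBi
      have htend : Filter.Tendsto (fun t : ℝ => t * (M - B i)) Filter.atTop Filter.atTop :=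
        Filter.Tendsto.atTop_mul_const (by linarith) Filter.tendsto_id
      filter_upwards [htend.eventually_ge_atTop (A i - C)] with t ht
      nlinarith
  obtain ⟨T, hT⟩ := Filter.eventually_atTop.1 hev
  refine ⟨T, C, fun t ht => le_antisymm ?_ ?_⟩
  · exact Finset.sup'_le _ _ fun i _ => hT t ht i
  · obtain ⟨i, hiS, hAi⟩ := Finset.exists_mem_eq_sup' hSne A
    have hBi : B i = M := (Finset.mem_filter.1 hiS).2
    have heq : C + t * M = A i + t * B i := by rw [hC, hAi, hBi]
    rw [heq]
    exact Finset.le_sup' (fun i => A i + t * B i) (Finset.mem_univ i)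

/-- A CPWA function is eventually affine along every ray in the nonnegative orthant,
with asymptotic slope given by its radial function. -/
theorem stmt8 {d K : ℕ} (I : Fin K → ℕ) (ξ : Fin K → ℝ)
    (a : (k : Fin K) → Fin (I k + 1) → Fin d → ℝ)
    (b : (k : Fin K) → Fin (I k + 1) → ℝ)
    (hξ : ∀ k, ξ k = 1 ∨ ξ k = -1)
    (h htilde : (Fin d → ℝ) → ℝ)
    (hdef : ∀ x, h x = ∑ k, ξ k * (Finset.univ.sup' Finset.univ_nonempty
      fun i => (∑ j, a k i j * x j) + b k i))
    (htildedef : ∀ z, htilde z = ∑ k, ξ k * (Finset.univ.sup' Finset.univ_nonempty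
      fun i => ∑ j, a k i j * z j))
    (x₀ z : Fin d → ℝ) (hx₀ : ∀ j, 0 ≤ x₀ j) (hz : ∀ j, 0 ≤ z j) :
    ∃ tbar : ℝ, 0 < tbar ∧ ∃ c : ℝ,
      ∀ t : ℝ, tbar ≤ t →
        h (fun j => x₀ j + t * z j) = c + (t - tbar) * htilde z := by
  -- For each k, apply the affine-sup lemma
  have key : ∀ k : Fin K, ∃ T C : ℝ, ∀ t : ℝ, T ≤ t →
      (Finset.univ.sup' Finset.univ_nonempty
        fun i => (∑ j, a k i j * x₀ j + b k i) + t * (∑ j, a k i j * z j))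
        = C + t * (Finset.univ.sup' Finset.univ_nonempty fun i => ∑ j, a k i j * z j) :=
    fun k => aff_sup _ _
  choose T C hTC using key
  set M : Fin K → ℝ :=
    fun k => Finset.univ.sup' Finset.univ_nonempty fun i => ∑ j, a k i j * z j with hMdef
  set tbar : ℝ := 1 + ∑ k, |T k| with htbar
  have hsum_nonneg : (0:ℝ) ≤ ∑ k, |T k| := Finset.sum_nonneg fun _ _ => abs_nonneg _
  have htbar_pos : (0 : ℝ) < tbar := by rw [htbar]; linarith
  have htbar_ge : ∀ k, T k ≤ tbar := fun k => by
    have h1 : |T k| ≤ ∑ k, |T k| :=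
      Finset.single_le_sum (f := fun j => |T j|) (fun _ _ => abs_nonneg _) (Finset.mem_univ k)
    have h2 := le_abs_self (T k)
    rw [htbar]; linarith
  refine ⟨tbar, htbar_pos, ∑ k, ξ k * (C k + tbar * M k), fun t ht => ?_⟩
  have hsum : ∀ s : ℝ, tbar ≤ s →
      h (fun j => x₀ j + s * z j) = ∑ k, ξ k * (C k + s * M k) := by
    intro s hs
    rw [hdef]
    refine Finset.sum_congr rfl fun k _ => ?_
    congr 1
    have := hTC k s (le_trans (htbar_ge k) hs)
    rw [← this]
    congr 1
    ext i
    rw [Finset.mul_sum]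
    have hsplit : ∑ j, a k i j * (x₀ j + s * z j)
        = ∑ j, (a k i j * x₀ j + s * (a k i j * z j)) :=
      Finset.sum_congr rfl fun j _ => by ring
    rw [hsplit, Finset.sum_add_distrib]
    ring
  rw [hsum t ht, htildedef]
  rw [Finset.mul_sum, ← Finset.sum_add_distrib]
  refine Finset.sum_congr rfl fun k _ => ?_
  ring
end

section
/- Let A be a finite subset of ℝᵈ with 0 ∉ A. The interior of dual(A) ∩ ℝ₊ᵈ is empty if and only if there exist nonnegative scalars η_v ≥ 0 for v ∈ A with Σ_{v∈A} η_v = 1 and Σ_{v∈A} η_v v ≤ 0 componentwise. -/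
/-!
If some convex combination `x` of `A` is `≤ 0`, pick `w ∈ A` with positive weight: for `z` in the
cone, `0 ≤ ∑ η_v ⟨v, z⟩ = ⟨x, z⟩ ≤ 0` forces `⟨w, z⟩ = 0`, so the cone lies in a hyperplane.
Otherwise the compact set `conv A` is disjoint from the closed orthant `{x ≤ 0}`, and a separating
functional `-⟨z, ·⟩` yields `z ≥ 0` with `⟨a, z⟩ > 0` on `A`; since these strict inequalities are
open conditions, a slightly perturbed `z` with positive coordinates is an interior point.
-/

open Matrix Set

variable {ι : Type*} [Fintype ι]

theorem exists_nonneg_forall_dotProduct_pos (A : Finset (ι → ℝ))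
    (hA : ∀ x ∈ convexHull ℝ (A : Set (ι → ℝ)), ¬ x ≤ 0) :
    ∃ z : ι → ℝ, 0 ≤ z ∧ ∀ a ∈ A, 0 < a ⬝ᵥ z := by
  classical
  obtain ⟨f, u, v, hfu, huv, hvf⟩ := geometric_hahn_banach_compact_closed (convex_convexHull ℝ _)
    (A.finite_toSet.isCompact_convexHull ℝ) (convex_Iic 0) isClosed_Iic
    (Set.disjoint_left.2 hA)
  have hv : v < 0 := by simpa using hvf 0 self_mem_Iic
  -- `Iic 0` is a cone, so `f` is bounded below on it only if it is nonnegative there.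
  have hf_nonneg : ∀ y ≤ 0, 0 ≤ f y := by
    intro y hy
    by_contra! hfy
    have := hvf ((v / f y) • y)
      (smul_nonpos_of_nonneg_of_nonpos (div_nonneg_of_nonpos hv.le hfy.le) hy)
    rw [map_smul, smul_eq_mul, div_mul_cancel₀ v hfy.ne] at this
    exact this.false
  obtain ⟨c, hc⟩ := (dotProductEquiv ℝ ι).surjective f.toLinearMap
  have hfc : ∀ x, f x = c ⬝ᵥ x := fun x => (LinearMap.congr_fun hc x).symm
  refine ⟨-c, fun i => ?_, fun a ha => ?_⟩
  · have := hf_nonneg (Pi.single i (-1)) (Pi.single_nonpos.2 (by norm_num))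
    simpa [hfc] using this
  · have := hfu a (subset_convexHull ℝ _ ha)
    rw [hfc, dotProduct_comm] at this
    rw [dotProduct_neg]
    linarith

theorem nonempty_interior_of_nonneg_forall_dotProduct_pos (A : Finset (ι → ℝ)) {z : ι → ℝ}
    (hz : 0 ≤ z) (hA : ∀ a ∈ A, 0 < a ⬝ᵥ z) :
    (interior {y : ι → ℝ | (∀ a ∈ A, 0 ≤ a ⬝ᵥ y) ∧ 0 ≤ y}).Nonempty := by
  set V : Set (ι → ℝ) := ⋂ a ∈ A, {y | 0 < a ⬝ᵥ y}
  set P : Set (ι → ℝ) := univ.pi fun _ => Ioi 0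
  have hV : IsOpen V := isOpen_biInter_finset fun a _ => isOpen_lt continuous_const (by fun_prop)
  have hP : IsOpen P := isOpen_set_pi finite_univ fun _ _ => isOpen_Ioi
  have hzP : z ∈ closure P := by
    rw [closure_pi_set]
    exact fun i _ => by simpa [closure_Ioi] using hz i
  obtain ⟨y, hyV, hyP⟩ := mem_closure_iff.1 hzP V hV (mem_iInter₂.2 hA)
  have hVP : V ∩ P ⊆ {y | (∀ a ∈ A, 0 ≤ a ⬝ᵥ y) ∧ 0 ≤ y} := fun x ⟨hxV, hxP⟩ =>
    ⟨fun a ha => (mem_iInter₂.1 hxV a ha).le, fun i => (hxP i (mem_univ i)).le⟩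
  exact ⟨y, mem_interior.2 ⟨V ∩ P, hVP, hV.inter hP, hyV, hyP⟩⟩

theorem interior_setOf_dotProduct_eq_zero {v : ι → ℝ} (hv : v ≠ 0) :
    interior {z : ι → ℝ | v ⬝ᵥ z = 0} = ∅ := by
  by_contra h
  have := (LinearMap.ker (dotProductBilin ℝ ℝ v)).eq_top_of_nonempty_interior'
    (nonempty_iff_ne_empty.2 h)
  exact hv (dotProduct_self_eq_zero.1 (LinearMap.mem_ker.1 (this ▸ Submodule.mem_top)))

theorem dotProduct_eq_zero_of_sum_smul_nonpos (A : Finset (ι → ℝ)) {η : (ι → ℝ) → ℝ}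
    (hη : ∀ w ∈ A, 0 ≤ η w) (hsum : ∑ w ∈ A, η w • w ≤ 0) {z : ι → ℝ}
    (hz : (∀ a ∈ A, 0 ≤ a ⬝ᵥ z) ∧ 0 ≤ z) {w : ι → ℝ} (hw : w ∈ A) (hηw : 0 < η w) :
    w ⬝ᵥ z = 0 := by
  have hterms : ∀ a ∈ A, 0 ≤ η a * (a ⬝ᵥ z) := fun a ha => mul_nonneg (hη a ha) (hz.1 a ha)
  have htotal : ∑ a ∈ A, η a * (a ⬝ᵥ z) = 0 := by
    refine le_antisymm ?_ (Finset.sum_nonneg hterms)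
    simp_rw [← smul_eq_mul, ← smul_dotProduct, ← sum_dotProduct]
    exact (dotProduct_le_dotProduct_of_nonneg_right hsum hz.2).trans_eq (zero_dotProduct z)
  have := (Finset.sum_eq_zero_iff_of_nonneg hterms).1 htotal w hw
  exact (mul_eq_zero.1 this).resolve_left hηw.ne'

/-- The interior of dual(A) ∩ ℝ₊ᵈ is empty iff some convex combination of the
elements of A is componentwise ≤ 0. -/
theorem stmt10 {d : ℕ} (A : Finset (Fin d → ℝ)) (hA : (0 : Fin d → ℝ) ∉ A) :
    interior {z : Fin d → ℝ | (∀ w ∈ A, 0 ≤ ∑ j, w j * z j) ∧ ∀ j, 0 ≤ z j} = ∅ ↔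
    ∃ η : (Fin d → ℝ) → ℝ, (∀ w ∈ A, 0 ≤ η w) ∧ (∑ w ∈ A, η w) = 1 ∧
      ∀ j, (∑ w ∈ A, η w * w j) ≤ 0 := by
  constructor
  · intro h
    by_contra hη
    obtain ⟨z, hz, hzA⟩ := exists_nonneg_forall_dotProduct_pos A fun x hx hx0 => hη <| by
      obtain ⟨η, hη0, hη1, rfl⟩ := Finset.mem_convexHull'.1 hx
      exact ⟨η, hη0, hη1, fun j => by simpa [Finset.sum_apply] using hx0 j⟩
    exact (nonempty_interior_of_nonneg_forall_dotProduct_pos A hz hzA).ne_empty h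
  · rintro ⟨η, hη0, hη1, hηle⟩
    obtain ⟨w, hwA, hηw⟩ : ∃ w ∈ A, 0 < η w :=
      Finset.exists_lt_of_sum_lt (by simp [hη1] : ∑ w ∈ A, (0 : ℝ) < ∑ w ∈ A, η w)
    have hsum : ∑ w ∈ A, η w • w ≤ 0 := fun j => by simpa [Finset.sum_apply] using hηle j
    refine subset_eq_empty (interior_mono fun z hz => ?_)
      (interior_setOf_dotProduct_eq_zero (ne_of_mem_of_not_mem hwA hA))
    exact dotProduct_eq_zero_of_sum_smul_nonpos A hη0 hsum hz hwA hηw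
end

section
/- The global minimization of a CPWA function h(x) = Σₖ ξₖ max{⟨a_{k,i},x⟩ + b_{k,i} : 1 ≤ i ≤ Iₖ} over the box {x : 0 ≤ x ≤ x̄} is equivalent to the mixed-integer linear program where each term with ξₖ = 1 is replaced by an epigraph variable λₖ with constraints ⟨a_{k,i},x⟩ + b_{k,i} ≤ λₖ, and each term with ξₖ = −1 is replaced by a variable ζₖ with slack variables δ_{k,i} ∈ [0, M_{k,i}(1−ι_{k,i})], binary variables ι_{k,i} ∈ {0,1} with Σᵢ ι_{k,i} = 1, and constraints ⟨a_{k,i},x⟩ + b_{k,i} + δ_{k,i} = ζₖ, where M_{k,i} is the maximum of ⟨a_{k,i'} − a_{k,i}, x⟩ + b_{k,i'} − b_{k,i} over the box and i' ≠ i. Every minimizer of one problem yields a feasible point of the other with equal objective value, so the two problems have the same optimal value. -/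
/-!
For a box point `x`, put `λₖ = ζₖ = maxᵢ (⟨a_{k,i}, x⟩ + b_{k,i})`, let `ι_k` select a maximizing
piece and `δ_{k,i}` be the gap to the maximum; the gap of a non-selected piece is at most
`M_{k,i}`, so this point is feasible with objective `h x`. Conversely, in any feasible point
`λₖ` dominates every piece, hence the maximum, while `ι_k` selects a piece with zero slack, which
forces `ζₖ` to equal the maximum; so the objective is at least `h x`. The two value sets are thus
mutually coinitial and have the same infimum.
-/

section MILP

variable {d K : ℕ}

/-- Feasibility for the MILP reformulation of minimizing a CPWA function over a box. -/
def MILPFeasible (I : Fin K → ℕ) (ξ : Fin K → ℝ)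
    (a : (k : Fin K) → Fin (I k + 1) → Fin d → ℝ)
    (b : (k : Fin K) → Fin (I k + 1) → ℝ)
    (xbar : Fin d → ℝ) (M : (k : Fin K) → Fin (I k + 1) → ℝ)
    (x : Fin d → ℝ) (lam zeta : Fin K → ℝ)
    (delta iota : (k : Fin K) → Fin (I k + 1) → ℝ) : Prop :=
  (∀ j, 0 ≤ x j ∧ x j ≤ xbar j) ∧
  (∀ k, ξ k = 1 → ∀ i, (∑ j, a k i j * x j) + b k i ≤ lam k) ∧
  (∀ k, ξ k = -1 →
    (∀ i, iota k i = 0 ∨ iota k i = 1) ∧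
    (∑ i, iota k i) = 1 ∧
    (∀ i, (∑ j, a k i j * x j) + b k i + delta k i = zeta k) ∧
    (∀ i, 0 ≤ delta k i ∧ delta k i ≤ M k i * (1 - iota k i)))

/-- Objective of the MILP: Σ_{ξₖ=1} λₖ − Σ_{ξₖ=−1} ζₖ. -/
noncomputable def MILPObj (ξ : Fin K → ℝ) (lam zeta : Fin K → ℝ) : ℝ :=
  (∑ k ∈ Finset.univ.filter (fun k => ξ k = 1), lam k)
    - ∑ k ∈ Finset.univ.filter (fun k => ξ k = -1), zeta k

open Finset

theorem sum_mul_eq_sum_filter_sub_sum_filter {κ : Type*} [Fintype κ] {ξ : κ → ℝ}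
    (hξ : ∀ k, ξ k = 1 ∨ ξ k = -1) (s : κ → ℝ) :
    ∑ k, ξ k * s k = ∑ k ∈ univ.filter (ξ · = 1), s k - ∑ k ∈ univ.filter (ξ · = -1), s k := by
  have hnot : univ.filter (fun k => ¬ξ k = 1) = univ.filter (ξ · = -1) := by
    ext k
    rcases hξ k with hk | hk <;> norm_num [hk]
  rw [← sum_filter_add_sum_filter_not univ (ξ · = 1), hnot, sub_eq_add_neg, ← sum_neg_distrib]
  congr 1 <;> refine sum_congr rfl fun k hk => ?_ <;> simp [(mem_filter.mp hk).2]

/-- The binaries `β` pick one index, at which the slack `δ` is forced to vanish. -/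
def IsBigMSelection {ι : Type*} [Fintype ι] (f M : ι → ℝ) (z : ℝ) (δ β : ι → ℝ) : Prop :=
  (∀ i, β i = 0 ∨ β i = 1) ∧ ∑ i, β i = 1 ∧ (∀ i, f i + δ i = z) ∧
    ∀ i, 0 ≤ δ i ∧ δ i ≤ M i * (1 - β i)

theorem IsBigMSelection.eq_sup' {ι : Type*} [Fintype ι] [Nonempty ι] {f M δ β : ι → ℝ} {z : ℝ}
    (h : IsBigMSelection f M z δ β) : z = univ.sup' univ_nonempty f := by
  obtain ⟨hbin, hsum, heq, hδ⟩ := h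
  obtain ⟨i₁, hi₁⟩ : ∃ i, β i = 1 := by
    by_contra! hne
    simp [fun i => (hbin i).resolve_right (hne i)] at hsum
  have hδ₁ : δ i₁ = 0 := le_antisymm (by simpa [hi₁] using (hδ i₁).2) (hδ i₁).1
  refine le_antisymm ?_ (sup'_le _ _ fun i _ => ?_)
  · rw [← heq i₁, hδ₁, add_zero]
    exact le_sup' f (mem_univ i₁)
  · rw [← heq i]
    linarith [(hδ i).1]

theorem exists_isBigMSelection_sup' {ι : Type*} [Fintype ι] [Nonempty ι] {f M : ι → ℝ}
    (hM : ∀ i i', i' ≠ i → f i' - f i ≤ M i) :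
    ∃ δ β, IsBigMSelection f M (univ.sup' univ_nonempty f) δ β := by
  classical
  obtain ⟨i₀, -, hi₀⟩ := exists_mem_eq_sup' univ_nonempty f
  refine ⟨fun i => univ.sup' univ_nonempty f - f i, fun i => if i = i₀ then 1 else 0,
    fun i => by simp only; split_ifs <;> simp, by simp, fun i => by ring, fun i => ⟨?_, ?_⟩⟩
  · exact sub_nonneg.mpr (le_sup' f (mem_univ i))
  · rcases eq_or_ne i i₀ with rfl | hi
    · simp [hi₀]
    · simpa [hi, hi₀] using hM i i₀ hi.symm

theorem sum_mul_le_sum_abs_mul {n : Type*} [Fintype n] {c x xbar : n → ℝ}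
    (hx : ∀ j, 0 ≤ x j ∧ x j ≤ xbar j) : ∑ j, c j * x j ≤ ∑ j, |c j| * xbar j :=
  sum_le_sum fun j _ => (mul_le_mul_of_nonneg_right (le_abs_self _) (hx j).1).trans
    (mul_le_mul_of_nonneg_left (hx j).2 (abs_nonneg _))

/-- The set whose supremum is the big-M constant `M_i` of the piece `i`. -/
def bigMValues {n ι : Type*} [Fintype n] (a : ι → n → ℝ) (b : ι → ℝ) (xbar : n → ℝ) (i : ι) :
    Set ℝ :=
  {v | ∃ (x : n → ℝ) (i' : ι), (∀ j, 0 ≤ x j ∧ x j ≤ xbar j) ∧ i' ≠ i ∧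
    v = (∑ j, (a i' j - a i j) * x j) + (b i' - b i)}

theorem bddAbove_bigMValues {n ι : Type*} [Fintype n] [Fintype ι] (a : ι → n → ℝ) (b : ι → ℝ)
    (xbar : n → ℝ) (i : ι) : BddAbove (bigMValues a b xbar i) := by
  refine ⟨univ.sup' ⟨i, mem_univ i⟩ fun i' => (∑ j, |a i' j - a i j| * xbar j) + (b i' - b i),
    ?_⟩
  rintro _ ⟨x, i', hx, -, rfl⟩
  exact le_sup'_of_le _ (mem_univ i') (add_le_add_left (sum_mul_le_sum_abs_mul hx) _)

theorem sub_le_sSup_bigMValues {n ι : Type*} [Fintype n] [Fintype ι] {a : ι → n → ℝ}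
    {b : ι → ℝ} {xbar x : n → ℝ} (hx : ∀ j, 0 ≤ x j ∧ x j ≤ xbar j) {i i' : ι} (hne : i' ≠ i) :
    ((∑ j, a i' j * x j) + b i') - ((∑ j, a i j * x j) + b i) ≤
      sSup (bigMValues a b xbar i) :=
  le_csSup_of_le (bddAbove_bigMValues a b xbar i) ⟨x, i', hx, hne, rfl⟩ <| le_of_eq <| by
    simp only [sub_mul, sum_sub_distrib]
    ring

noncomputable def cpwa (I : Fin K → ℕ) (ξ : Fin K → ℝ)
    (a : (k : Fin K) → Fin (I k + 1) → Fin d → ℝ) (b : (k : Fin K) → Fin (I k + 1) → ℝ)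
    (x : Fin d → ℝ) : ℝ :=
  ∑ k, ξ k * univ.sup' univ_nonempty fun i => (∑ j, a k i j * x j) + b k i

section Feasible

variable {I : Fin K → ℕ} {ξ : Fin K → ℝ} {a : (k : Fin K) → Fin (I k + 1) → Fin d → ℝ}
  {b : (k : Fin K) → Fin (I k + 1) → ℝ} {xbar : Fin d → ℝ} {M : (k : Fin K) → Fin (I k + 1) → ℝ}
  {x : Fin d → ℝ}

theorem MILPFeasible.cpwa_le_obj (hξ : ∀ k, ξ k = 1 ∨ ξ k = -1) {lam zeta : Fin K → ℝ}
    {delta iota : (k : Fin K) → Fin (I k + 1) → ℝ}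
    (hfeas : MILPFeasible I ξ a b xbar M x lam zeta delta iota) :
    cpwa I ξ a b x ≤ MILPObj ξ lam zeta := by
  obtain ⟨-, hlam, hzeta⟩ := hfeas
  rw [cpwa, sum_mul_eq_sum_filter_sub_sum_filter hξ, MILPObj]
  refine sub_le_sub (sum_le_sum fun k hk => sup'_le _ _ fun i _ => hlam k (mem_filter.mp hk).2 i)
    (sum_congr rfl fun k hk => IsBigMSelection.eq_sup' (hzeta k (mem_filter.mp hk).2)).le

theorem exists_MILPFeasible_obj_eq_cpwa (hξ : ∀ k, ξ k = 1 ∨ ξ k = -1)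
    (hx : ∀ j, 0 ≤ x j ∧ x j ≤ xbar j)
    (hM : ∀ k i i', i' ≠ i →
      ((∑ j, a k i' j * x j) + b k i') - ((∑ j, a k i j * x j) + b k i) ≤ M k i) :
    ∃ lam zeta delta iota, MILPFeasible I ξ a b xbar M x lam zeta delta iota ∧
      MILPObj ξ lam zeta = cpwa I ξ a b x := by
  choose delta iota hsel using fun k => exists_isBigMSelection_sup' (hM k)
  set piece := fun k i => (∑ j, a k i j * x j) + b k i
  refine ⟨fun k => univ.sup' univ_nonempty (piece k), _, delta, iota,
    ⟨hx, fun k _ i => le_sup' (piece k) (mem_univ i), fun k _ => hsel k⟩, ?_⟩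
  rw [cpwa, sum_mul_eq_sum_filter_sub_sum_filter hξ, MILPObj]

end Feasible

theorem stmt11_general (I : Fin K → ℕ) (ξ : Fin K → ℝ)
    (a : (k : Fin K) → Fin (I k + 1) → Fin d → ℝ)
    (b : (k : Fin K) → Fin (I k + 1) → ℝ)
    (hξ : ∀ k, ξ k = 1 ∨ ξ k = -1)
    (h : (Fin d → ℝ) → ℝ)
    (hdef : ∀ x, h x = ∑ k, ξ k * (Finset.univ.sup' Finset.univ_nonempty
      fun i => (∑ j, a k i j * x j) + b k i))
    (xbar : Fin d → ℝ)
    (M : (k : Fin K) → Fin (I k + 1) → ℝ)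
    (hM : ∀ k i, M k i = sSup {v : ℝ | ∃ (x : Fin d → ℝ) (i' : Fin (I k + 1)),
        (∀ j, 0 ≤ x j ∧ x j ≤ xbar j) ∧ i' ≠ i ∧
        v = (∑ j, (a k i' j - a k i j) * x j) + (b k i' - b k i)}) :
    (∀ x : Fin d → ℝ, (∀ j, 0 ≤ x j ∧ x j ≤ xbar j) →
      ∃ lam zeta delta iota, MILPFeasible I ξ a b xbar M x lam zeta delta iota ∧
        MILPObj ξ lam zeta = h x) ∧
    (∀ x lam zeta delta iota, MILPFeasible I ξ a b xbar M x lam zeta delta iota →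
      (∀ x' lam' zeta' delta' iota',
        MILPFeasible I ξ a b xbar M x' lam' zeta' delta' iota' →
        MILPObj ξ lam zeta ≤ MILPObj ξ lam' zeta') →
      MILPObj ξ lam zeta = h x) ∧
    sInf {v : ℝ | ∃ x : Fin d → ℝ, (∀ j, 0 ≤ x j ∧ x j ≤ xbar j) ∧ v = h x} =
      sInf {v : ℝ | ∃ x lam zeta delta iota,
        MILPFeasible I ξ a b xbar M x lam zeta delta iota ∧
        v = MILPObj ξ lam zeta} := by
  obtain rfl : h = cpwa I ξ a b := funext hdef
  have hlift (x : Fin d → ℝ) (hx : ∀ j, 0 ≤ x j ∧ x j ≤ xbar j) :=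
    exists_MILPFeasible_obj_eq_cpwa hξ hx fun k i i' hne =>
      (hM k i).symm ▸ sub_le_sSup_bigMValues hx hne
  refine ⟨hlift, fun x lam zeta delta iota hfeas hmin => ?_, ?_⟩
  · obtain ⟨lam', zeta', delta', iota', hfeas', hobj'⟩ := hlift x hfeas.1
    exact le_antisymm (hobj' ▸ hmin _ _ _ _ _ hfeas') (hfeas.cpwa_le_obj hξ)
  · refine csInf_eq_csInf_of_forall_exists_le ?_ ?_
    · rintro _ ⟨x, hx, rfl⟩
      obtain ⟨lam, zeta, delta, iota, hfeas, hobj⟩ := hlift x hx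
      exact ⟨_, ⟨x, lam, zeta, delta, iota, hfeas, rfl⟩, hobj.le⟩
    · rintro _ ⟨x, lam, zeta, delta, iota, hfeas, rfl⟩
      exact ⟨_, ⟨x, hfeas.1, rfl⟩, hfeas.cpwa_le_obj hξ⟩

/-- Global minimization of a CPWA function over a box is equivalent to the MILP:
every box point is matched by a feasible MILP point with equal objective, every MILP
minimizer has objective equal to the CPWA value at its x-part, and the optimal
values coincide. -/
theorem stmt11 (I : Fin K → ℕ) (ξ : Fin K → ℝ)
    (a : (k : Fin K) → Fin (I k + 1) → Fin d → ℝ)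
    (b : (k : Fin K) → Fin (I k + 1) → ℝ)
    (hξ : ∀ k, ξ k = 1 ∨ ξ k = -1)
    (h : (Fin d → ℝ) → ℝ)
    (hdef : ∀ x, h x = ∑ k, ξ k * (Finset.univ.sup' Finset.univ_nonempty
      fun i => (∑ j, a k i j * x j) + b k i))
    (hbdd : ∃ L : ℝ, ∀ x : Fin d → ℝ, (∀ j, 0 ≤ x j) → L ≤ h x)
    (xbar : Fin d → ℝ) (hxbar : ∀ j, 0 < xbar j)
    (M : (k : Fin K) → Fin (I k + 1) → ℝ)
    (hM : ∀ k i, M k i = sSup {v : ℝ | ∃ (x : Fin d → ℝ) (i' : Fin (I k + 1)),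
        (∀ j, 0 ≤ x j ∧ x j ≤ xbar j) ∧ i' ≠ i ∧
        v = (∑ j, (a k i' j - a k i j) * x j) + (b k i' - b k i)}) :
    (∀ x : Fin d → ℝ, (∀ j, 0 ≤ x j ∧ x j ≤ xbar j) →
      ∃ lam zeta delta iota, MILPFeasible I ξ a b xbar M x lam zeta delta iota ∧
        MILPObj ξ lam zeta = h x) ∧
    (∀ x lam zeta delta iota, MILPFeasible I ξ a b xbar M x lam zeta delta iota →
      (∀ x' lam' zeta' delta' iota',
        MILPFeasible I ξ a b xbar M x' lam' zeta' delta' iota' →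
        MILPObj ξ lam zeta ≤ MILPObj ξ lam' zeta') →
      MILPObj ξ lam zeta = h x) ∧
    sInf {v : ℝ | ∃ x : Fin d → ℝ, (∀ j, 0 ≤ x j ∧ x j ≤ xbar j) ∧ v = h x} =
      sInf {v : ℝ | ∃ x lam zeta delta iota,
        MILPFeasible I ξ a b xbar M x lam zeta delta iota ∧
        v = MILPObj ξ lam zeta} :=
  stmt11_general I ξ a b hξ h hdef xbar M hM

end MILP
end

section
/- Under the no-arbitrage assumption, if φ(f) = inf{c + π(y) : c + ⟨y,g⟩ ≥ f pointwise} is finite, then the infimum is attained: there exists y ∈ ℝᵐ with φ(f) + ⟨y, g(ω)⟩ − π(y) ≥ f(ω) for all ω ∈ Ω. -/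
/-!
Splitting each position into a long part, bought at the ask `pihi`, and a short part, sold at
the bid `pilo`, turns the problem into superhedging with nonnegative combinations of the `2m`
payoffs `g j - pihi j` and `pilo j - g j`; for these, no-arbitrage says that a nonnegative
combination with nonnegative payoff has zero payoff. Take hedges `z_ε` of `f` at cost `φ(f) + ε`.
If they can be chosen bounded, compactness yields a hedge at cost `φ(f)`. Otherwise a limit
direction `u` of the normalised `z_ε` is a nonnegative combination with nonnegative, hence zero,
payoff, and subtracting from `z_ε` the largest multiple of `u` that keeps it nonnegative kills one
coordinate without changing the payoff; induction on the support concludes.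
-/

open Filter Topology Metric

theorem exists_norm_eq_one_forall_le_of_not_isBounded {E : Type*} [NormedAddCommGroup E]
    [NormedSpace ℝ E] [FiniteDimensional ℝ E] {s : Set E} (hs : ¬Bornology.IsBounded s) :
    ∃ u : E, ‖u‖ = 1 ∧ ∀ (ℓ : E →ₗ[ℝ] ℝ) (a : ℝ), (∀ x ∈ s, a ≤ ℓ x) → 0 ≤ ℓ u := by
  have hlarge : ∀ n : ℕ, ∃ x ∈ s, (n : ℝ) < ‖x‖ := by
    by_contra! ⟨n, hn⟩
    exact hs ((isBounded_iff_subset_closedBall 0).2 ⟨n, fun x hx => by simpa using hn x hx⟩)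
  choose z hzs hzn using hlarge
  have hz0 : ∀ n, z n ≠ 0 := fun n => norm_pos_iff.1 (n.cast_nonneg.trans_lt (hzn n))
  have hnorm : Tendsto (fun n => ‖z n‖) atTop atTop :=
    tendsto_atTop_mono (fun n => (hzn n).le) tendsto_natCast_atTop_atTop
  obtain ⟨u, hu, φ, hφ, hlim⟩ := (isCompact_sphere (0 : E) 1).tendsto_subseq
    (x := fun n => ‖z n‖⁻¹ • z n) fun n => by
      simpa using norm_smul_inv_norm (𝕜 := ℝ) (hz0 n)
  refine ⟨u, by simpa using hu, fun ℓ a ha => ?_⟩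
  have hℓ : Tendsto (fun k => ‖z (φ k)‖⁻¹ * ℓ (z (φ k))) atTop (𝓝 (ℓ u)) := by
    simpa [Function.comp_def] using
      ((LinearMap.continuous_of_finiteDimensional ℓ).tendsto u).comp hlim
  have hinv : Tendsto (fun k => ‖z (φ k)‖⁻¹ * a) atTop (𝓝 0) := by
    simpa using ((hnorm.comp hφ.tendsto_atTop).inv_tendsto_atTop).mul_const a
  exact le_of_tendsto_of_tendsto' hinv hℓ fun k =>
    mul_le_mul_of_nonneg_left (ha _ (hzs _)) (inv_nonneg.2 (norm_nonneg _))

theorem Finset.exists_mem_forall_pos_of_monotone {α : Type*} {J : Finset α}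
    {P : α → ℝ → Prop} (hP : ∀ j ⦃ε ε' : ℝ⦄, ε ≤ ε' → P j ε → P j ε')
    (h : ∀ ε > 0, ∃ j ∈ J, P j ε) : ∃ j ∈ J, ∀ ε > 0, P j ε := by
  by_contra! hbad
  choose! δ hδpos hδ using hbad
  obtain ⟨j₁, hj₁, -⟩ := h 1 one_pos
  obtain ⟨j, hj, hPj⟩ := h (J.inf' ⟨j₁, hj₁⟩ δ) ((Finset.lt_inf'_iff _).2 hδpos)
  exact hδ j hj (hP j (Finset.inf'_le δ hj) hPj)

theorem exists_sub_smul_nonneg_apply_eq_zero {ι : Type*} [Fintype ι] {z u : ι → ℝ}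
    (hz : 0 ≤ z) (hu : 0 ≤ u) (hu0 : u ≠ 0) :
    ∃ j, 0 < u j ∧ 0 ≤ z - (z j / u j) • u ∧ (z - (z j / u j) • u) j = 0 := by
  classical
  obtain ⟨i₀, hi₀⟩ := Function.ne_iff.1 hu0
  have hpos : (Finset.univ.filter fun i => 0 < u i).Nonempty :=
    ⟨i₀, by simpa using (hu i₀).lt_of_ne' hi₀⟩
  obtain ⟨j, hj, hmin⟩ := Finset.exists_min_image _ (fun i => z i / u i) hpos
  have huj : 0 < u j := by simpa using hj
  refine ⟨j, huj, fun i => ?_, by simp [div_mul_cancel₀ _ huj.ne']⟩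
  rcases (hu i).eq_or_lt with hui | hui
  · simpa [← hui] using hz i
  · have := hmin i (by simpa using hui)
    simpa [sub_nonneg] using (le_div_iff₀ hui).1 this

section Superhedging

variable {ι Ω : Type*} [Fintype ι] (h : ι → Ω → ℝ) (f : Ω → ℝ)

def superhedgeSet (c : ℝ) : Set (ι → ℝ) :=
  {z | 0 ≤ z ∧ ∀ ω, f ω ≤ c + ∑ i, z i * h i ω}

variable {h f}

theorem superhedgeSet_mono {c c' : ℝ} (hc : c ≤ c') :
    superhedgeSet h f c ⊆ superhedgeSet h f c' :=
  fun _ hz => ⟨hz.1, fun ω => (hz.2 ω).trans (by linarith)⟩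

theorem isClosed_superhedgeSet (c : ℝ) : IsClosed (superhedgeSet h f c) := by
  simp only [superhedgeSet, Set.ofPred_and, Set.ofPred_forall]
  exact (isClosed_le continuous_const continuous_id).inter
    (isClosed_iInter fun ω => isClosed_le continuous_const (by fun_prop))

theorem superhedgeSet_nonempty_of_bounded {c M : ℝ}
    (hM : ∀ ε > 0, (superhedgeSet h f (c + ε) ∩ closedBall 0 M).Nonempty) :
    (superhedgeSet h f c).Nonempty := by
  let t : {ε : ℝ // 0 < ε} → Set (ι → ℝ) := fun ε => superhedgeSet h f (c + ε) ∩ closedBall 0 M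
  have hdir : Directed (· ⊇ ·) t := fun ε₁ ε₂ =>
    ⟨⟨min ε₁ ε₂, lt_min ε₁.2 ε₂.2⟩,
      Set.inter_subset_inter_left _ (superhedgeSet_mono (by simp)),
      Set.inter_subset_inter_left _ (superhedgeSet_mono (by simp))⟩
  have : Nonempty {ε : ℝ // 0 < ε} := ⟨⟨1, one_pos⟩⟩
  obtain ⟨z, hz⟩ := IsCompact.nonempty_iInter_of_directed_nonempty_isCompact_isClosed t hdir
    (fun ε => hM ε ε.2) (fun _ => (isCompact_closedBall 0 M).inter_left (isClosed_superhedgeSet _))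
    (fun _ => (isClosed_superhedgeSet _).inter isClosed_closedBall)
  simp only [Set.mem_iInter] at hz
  refine ⟨z, (hz ⟨1, one_pos⟩).1.1, fun ω => le_of_forall_pos_le_add fun ε hε => ?_⟩
  linarith [(hz ⟨ε, hε⟩).1.2 ω]

theorem exists_mem_superhedgeSet_erase [DecidableEq ι] {c : ℝ} {J : Finset ι} {u : ι → ℝ}
    (hu : 0 ≤ u) (hu0 : u ≠ 0) (huJ : ∀ i ∉ J, u i = 0) (hnull : ∀ ω, ∑ i, u i * h i ω = 0)
    {z : ι → ℝ} (hz : z ∈ superhedgeSet h f c) (hzJ : ∀ i ∉ J, z i = 0) :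
    ∃ j ∈ J, ∃ z' ∈ superhedgeSet h f c, ∀ i ∉ J.erase j, z' i = 0 := by
  obtain ⟨j, huj, hnonneg, hzero⟩ := exists_sub_smul_nonneg_apply_eq_zero hz.1 hu hu0
  have hjJ : j ∈ J := by by_contra hj; exact huj.ne' (huJ j hj)
  refine ⟨j, hjJ, z - (z j / u j) • u, ⟨hnonneg, fun ω => ?_⟩, fun i hi => ?_⟩
  · have hpay : ∑ i, (z - (z j / u j) • u) i * h i ω = ∑ i, z i * h i ω := by
      simp only [Pi.sub_apply, Pi.smul_apply, smul_eq_mul, sub_mul, Finset.sum_sub_distrib,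
        mul_assoc, ← Finset.mul_sum, hnull, mul_zero, sub_zero]
    exact hpay ▸ hz.2 ω
  · by_cases hij : i = j
    · exact hij ▸ hzero
    · have hiJ : i ∉ J := fun hiJ => hi (Finset.mem_erase.2 ⟨hij, hiJ⟩)
      simp [hzJ i hiJ, huJ i hiJ]

theorem superhedgeSet_nonempty_of_forall_pos [DecidableEq ι]
    (hNA : ∀ u : ι → ℝ, 0 ≤ u → (∀ ω, 0 ≤ ∑ i, u i * h i ω) → ∀ ω, ∑ i, u i * h i ω = 0)
    {c : ℝ} (J : Finset ι)
    (hJ : ∀ ε > 0, ∃ z ∈ superhedgeSet h f (c + ε), ∀ i ∉ J, z i = 0) :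
    (superhedgeSet h f c).Nonempty := by
  induction J using Finset.strongInduction with
  | H J ih =>
  by_cases hbdd : ∃ M, ∀ ε > 0, (superhedgeSet h f (c + ε) ∩ closedBall 0 M).Nonempty
  · obtain ⟨M, hM⟩ := hbdd
    exact superhedgeSet_nonempty_of_bounded hM
  push Not at hbdd
  let s := {z ∈ superhedgeSet h f (c + 1) | ∀ i ∉ J, z i = 0}
  have hs : ¬Bornology.IsBounded s := by
    rw [isBounded_iff_subset_closedBall 0]
    rintro ⟨M, hM⟩
    obtain ⟨ε, hε, hempty⟩ := hbdd M
    obtain ⟨z, hz, hzJ⟩ := hJ (min ε 1) (lt_min hε one_pos)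
    have hzs : z ∈ s := ⟨superhedgeSet_mono (by simp) hz, hzJ⟩
    exact hempty.subset ⟨superhedgeSet_mono (by simp) hz, hM hzs⟩
  obtain ⟨u, hu1, hrec⟩ := exists_norm_eq_one_forall_le_of_not_isBounded hs
  have hcoord : ∀ i, 0 ≤ u i :=
    fun i => hrec (LinearMap.proj i) 0 fun z hz => hz.1.1 i
  have huJ : ∀ i ∉ J, u i = 0 := fun i hi => le_antisymm
    (by simpa using hrec (-LinearMap.proj i) 0 fun z hz => by simp [hz.2 i hi]) (hcoord i)
  have hpay : ∀ ω, 0 ≤ ∑ i, u i * h i ω := fun ω => by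
    simpa [Fintype.linearCombination_apply] using
      hrec (Fintype.linearCombination ℝ fun i => h i ω) (f ω - (c + 1)) fun z hz => by
        simpa [Fintype.linearCombination_apply, sub_le_iff_le_add, add_comm] using hz.1.2 ω
  have hu0 : u ≠ 0 := by rintro rfl; simp at hu1
  obtain ⟨j, hj, hjε⟩ := Finset.exists_mem_forall_pos_of_monotone
    (P := fun j ε => ∃ z ∈ superhedgeSet h f (c + ε), ∀ i ∉ J.erase j, z i = 0)
    (fun j ε ε' hε ⟨z, hz, hzJ⟩ => ⟨z, superhedgeSet_mono (by linarith) hz, hzJ⟩)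
    fun ε hε => by
      obtain ⟨z, hz, hzJ⟩ := hJ ε hε
      exact exists_mem_superhedgeSet_erase hcoord hu0 huJ (hNA u hcoord hpay) hz hzJ
  exact ih (J.erase j) (Finset.erase_ssubset hj) hjε

end Superhedging

section BidAsk

variable {m : ℕ} {Ω : Type*} (g : Fin m → Ω → ℝ) (pilo pihi : Fin m → ℝ)

def bidAskPayoff : Fin m ⊕ Fin m → Ω → ℝ :=
  Sum.elim (fun j ω => g j ω - pihi j) (fun j ω => pilo j - g j ω)

variable {g pilo pihi}

theorem sum_mul_bidAskPayoff (u : Fin m ⊕ Fin m → ℝ) (ω : Ω) :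
    ∑ i, u i * bidAskPayoff g pilo pihi i ω =
      ∑ j, (u (.inl j) - u (.inr j)) * g j ω -
        ∑ j, (u (.inl j) * pihi j - u (.inr j) * pilo j) := by
  rw [Fintype.sum_sum_type, ← Finset.sum_sub_distrib, ← Finset.sum_add_distrib]
  refine Finset.sum_congr rfl fun j _ => ?_
  simp only [bidAskPayoff, Sum.elim_inl, Sum.elim_inr]
  ring

theorem posPart_sub_mul_sub_negPart_sub_mul_le {a b p q : ℝ} (ha : 0 ≤ a) (hb : 0 ≤ b)
    (hpq : p ≤ q) : (a - b)⁺ * q - (a - b)⁻ * p ≤ a * q - b * p := by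
  rcases le_total 0 (a - b) with hab | hab
  · rw [posPart_eq_self.2 hab, negPart_eq_zero.2 hab]
    nlinarith
  · rw [posPart_eq_zero.2 hab, negPart_eq_neg.2 hab]
    nlinarith

theorem sum_mul_bidAskPayoff_le (hple : ∀ j, pilo j ≤ pihi j) {u : Fin m ⊕ Fin m → ℝ}
    (hu : 0 ≤ u) (ω : Ω) :
    ∑ i, u i * bidAskPayoff g pilo pihi i ω ≤
      ∑ j, (u (.inl j) - u (.inr j)) * g j ω -
        priceFn pilo pihi (fun j => u (.inl j) - u (.inr j)) := by
  rw [sum_mul_bidAskPayoff]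
  exact sub_le_sub_left (Finset.sum_le_sum fun j _ =>
    posPart_sub_mul_sub_negPart_sub_mul_le (hu _) (hu _) (hple j)) _

theorem sum_mul_bidAskPayoff_posPart_negPart (y : Fin m → ℝ) (ω : Ω) :
    ∑ i, Sum.elim y⁺ y⁻ i * bidAskPayoff g pilo pihi i ω =
      ∑ j, y j * g j ω - priceFn pilo pihi y := by
  have hy : ∀ j, y⁺ j - y⁻ j = y j := fun j => congrFun (posPart_sub_negPart y) j
  simp only [sum_mul_bidAskPayoff, Sum.elim_inl, Sum.elim_inr, hy]
  -- on `ℝ`, `y⁺ j` and `y⁻ j` unfold to the `max`es in `priceFn`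
  rfl

theorem bidAskPayoff_noArbitrage (hple : ∀ j, pilo j ≤ pihi j)
    (hNA : ∀ y : Fin m → ℝ, (∀ ω, 0 ≤ (∑ j, y j * g j ω) - priceFn pilo pihi y) →
      (∀ ω, (∑ j, y j * g j ω) - priceFn pilo pihi y = 0))
    (u : Fin m ⊕ Fin m → ℝ) (hu : 0 ≤ u)
    (hpos : ∀ ω, 0 ≤ ∑ i, u i * bidAskPayoff g pilo pihi i ω)
    (ω : Ω) : ∑ i, u i * bidAskPayoff g pilo pihi i ω = 0 := by
  have hnet := hNA _ fun ω' => (hpos ω').trans (sum_mul_bidAskPayoff_le hple hu ω')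
  exact le_antisymm ((sum_mul_bidAskPayoff_le hple hu ω).trans_eq (hnet ω)) (hpos ω)

end BidAsk

theorem stmt13_general {Ω : Type*}
    (m : ℕ) (g : Fin m → Ω → ℝ)
    (pilo pihi : Fin m → ℝ) (hple : ∀ j, pilo j ≤ pihi j)
    (f : Ω → ℝ)
    (hNA : ∀ y : Fin m → ℝ,
      (∀ ω, 0 ≤ (∑ j, y j * g j ω) - priceFn pilo pihi y) →
      (∀ ω, (∑ j, y j * g j ω) - priceFn pilo pihi y = 0))
    (hne : {v : ℝ | ∃ (c : ℝ) (y : Fin m → ℝ),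
        (∀ ω, f ω ≤ c + ∑ j, y j * g j ω) ∧ v = c + priceFn pilo pihi y}.Nonempty) :
    ∃ y : Fin m → ℝ, ∀ ω,
      f ω ≤ sInf {v : ℝ | ∃ (c : ℝ) (y' : Fin m → ℝ),
          (∀ ω', f ω' ≤ c + ∑ j, y' j * g j ω') ∧ v = c + priceFn pilo pihi y'}
        + (∑ j, y j * g j ω) - priceFn pilo pihi y := by
  set S := {v : ℝ | ∃ (c : ℝ) (y : Fin m → ℝ),
    (∀ ω, f ω ≤ c + ∑ j, y j * g j ω) ∧ v = c + priceFn pilo pihi y}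
  obtain ⟨z, hz0, hz⟩ : (superhedgeSet (bidAskPayoff g pilo pihi) f (sInf S)).Nonempty :=
    superhedgeSet_nonempty_of_forall_pos (bidAskPayoff_noArbitrage hple hNA) .univ fun ε hε => by
      obtain ⟨_, ⟨c, y, hcy, rfl⟩, hlt⟩ := Real.lt_sInf_add_pos hne hε
      refine ⟨Sum.elim y⁺ y⁻, ⟨?_, fun ω => ?_⟩, by simp⟩
      · rintro (j | j) <;> simp [posPart_nonneg, negPart_nonneg]
      · rw [sum_mul_bidAskPayoff_posPart_negPart]
        linarith [hcy ω]
  exact ⟨fun j => z (.inl j) - z (.inr j), fun ω => by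
    linarith [hz ω, sum_mul_bidAskPayoff_le (g := g) hple hz0 ω]⟩

/-- Under the no-arbitrage assumption, if φ(f) is finite then the superhedging
infimum is attained: there is y with φ(f) + ⟨y,g⟩ − π(y) ≥ f pointwise. -/
theorem stmt13 {Ω : Type*} [TopologicalSpace Ω] [PolishSpace Ω]
    [MeasurableSpace Ω] [BorelSpace Ω]
    (m : ℕ) (g : Fin m → Ω → ℝ) (hg : ∀ j, Measurable (g j))
    (pilo pihi : Fin m → ℝ) (hple : ∀ j, pilo j ≤ pihi j)
    (f : Ω → ℝ) (hf : Measurable f)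
    (hNA : ∀ y : Fin m → ℝ,
      (∀ ω, 0 ≤ (∑ j, y j * g j ω) - priceFn pilo pihi y) →
      (∀ ω, (∑ j, y j * g j ω) - priceFn pilo pihi y = 0))
    (hne : {v : ℝ | ∃ (c : ℝ) (y : Fin m → ℝ),
        (∀ ω, f ω ≤ c + ∑ j, y j * g j ω) ∧ v = c + priceFn pilo pihi y}.Nonempty) :
    ∃ y : Fin m → ℝ, ∀ ω,
      f ω ≤ sInf {v : ℝ | ∃ (c : ℝ) (y' : Fin m → ℝ),
          (∀ ω', f ω' ≤ c + ∑ j, y' j * g j ω') ∧ v = c + priceFn pilo pihi y'}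
        + (∑ j, y j * g j ω) - priceFn pilo pihi y :=
  stmt13_general m g pilo pihi hple f hNA hne
end

section
/- Under the no-arbitrage assumption, the set C := {⟨y, g⟩ − π(y) : y ∈ ℝᵐ} − L⁰₊ of payoffs super-replicable at zero cost is closed under pointwise limits: if fₙ ∈ C for all n and fₙ → f pointwise on Ω, then f ∈ C. -/
/-!
Writing a position `y` as `y⁺ - y⁻`, the payoff `⟨y, g⟩ - π(y)` is the nonnegative combination
of the elementary trades `gⱼ - π̄ⱼ` (buy) and `π̲ⱼ - gⱼ` (sell) with coefficients `(y⁺, y⁻)`;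
conversely, as `π̲ ≤ π̄`, every nonnegative combination with coefficients `(a, b)` is dominated by
the payoff of `a - b`. So `C` is the set of functions below some element of a finitely generated
cone, and no-arbitrage says that `0` is the only nonnegative element of that cone.

By a conic Carathéodory argument every element of the cone is a combination over a positively
independent set of generators, and one such set serves for infinitely many `fₙ`. On it the
coefficients of `fₙ` cannot blow up: after normalisation their limit would be a nonzero
coefficient vector whose combination is nonnegative, hence zero by no-arbitrage, which positive
independence forbids. A convergent subsequence of coefficients then dominates `f`.
-/

open MeasureTheory Filter

open Topology

section FinitelyGeneratedCone

variable {ι : Type*}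

def nonnegSupportedIn (S : Finset ι) : Set (ι → ℝ) :=
  {d | 0 ≤ d ∧ ∀ k ∉ S, d k = 0}

theorem isClosed_nonnegSupportedIn (S : Finset ι) : IsClosed (nonnegSupportedIn S) := by
  refine isClosed_Ici.inter (?_ : IsClosed {d : ι → ℝ | ∀ k ∉ S, d k = 0})
  simp only [Set.ofPred_forall]
  exact isClosed_iInter fun k => isClosed_iInter fun _ =>
    isClosed_eq (continuous_apply k) continuous_const

theorem smul_mem_nonnegSupportedIn {S : Finset ι} {s : ℝ} (hs : 0 ≤ s) {d : ι → ℝ}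
    (hd : d ∈ nonnegSupportedIn S) : s • d ∈ nonnegSupportedIn S :=
  ⟨smul_nonneg hs hd.1, fun k hk => by simp [hd.2 k hk]⟩

def PosIndepOn {M : Type*} [AddCommMonoid M] [Module ℝ M] (L : (ι → ℝ) →ₗ[ℝ] M)
    (S : Finset ι) : Prop :=
  ∀ d ∈ nonnegSupportedIn S, L d = 0 → d = 0

theorem exists_sub_smul_nonneg_eq_zero [Fintype ι] {c d : ι → ℝ} (hc : 0 ≤ c)
    (hd : ∃ k, 0 < d k) : ∃ t : ℝ, ∃ k, 0 < d k ∧ 0 ≤ c - t • d ∧ c k = t * d k := by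
  classical
  obtain ⟨k₀, hk₀⟩ := hd
  set T := Finset.univ.filter fun k => 0 < d k
  have hT : T.Nonempty := ⟨k₀, by simpa [T] using hk₀⟩
  obtain ⟨k, hkT, hk⟩ := T.exists_mem_eq_inf' hT fun k => c k / d k
  have hdk : 0 < d k := by simpa [T] using hkT
  have ht : 0 ≤ T.inf' hT fun k => c k / d k := by
    rw [hk]; exact div_nonneg (hc k) hdk.le
  refine ⟨T.inf' hT fun k => c k / d k, k, hdk, fun i => ?_, by rw [hk, div_mul_cancel₀ _ hdk.ne']⟩
  rcases lt_or_ge 0 (d i) with hdi | hdi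
  · have := T.inf'_le (fun k => c k / d k) (show i ∈ T by simpa [T] using hdi)
    simpa [le_div_iff₀ hdi] using this
  · simpa using (mul_nonpos_of_nonneg_of_nonpos ht hdi).trans (hc i)

/-- Conic Carathéodory: remove generators along a nonnegative relation until none is left. -/
theorem exists_posIndepOn_eq [Fintype ι] {M : Type*} [AddCommGroup M] [Module ℝ M]
    (L : (ι → ℝ) →ₗ[ℝ] M) {c : ι → ℝ} (hc : 0 ≤ c) :
    ∃ S, PosIndepOn L S ∧ ∃ c' ∈ nonnegSupportedIn S, L c' = L c := by
  classical
  suffices h : ∀ S c, c ∈ nonnegSupportedIn S →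
      ∃ T, PosIndepOn L T ∧ ∃ c' ∈ nonnegSupportedIn T, L c' = L c from
    h Finset.univ c ⟨hc, by simp⟩
  intro S
  induction S using Finset.strongInduction with
  | H S ih =>
  intro c hc
  by_cases hS : PosIndepOn L S
  · exact ⟨S, hS, c, hc, rfl⟩
  obtain ⟨d, hdS, hLd, hd⟩ : ∃ d ∈ nonnegSupportedIn S, L d = 0 ∧ d ≠ 0 := by
    simpa [PosIndepOn] using hS
  obtain ⟨k, hk⟩ := Function.ne_iff.mp hd
  obtain ⟨t, k, hdk, hnonneg, hck⟩ :=
    exists_sub_smul_nonneg_eq_zero hc.1 ⟨k, (hdS.1 k).lt_of_ne' hk⟩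
  have hkS : k ∈ S := by
    by_contra hkS
    exact hdk.ne' (hdS.2 k hkS)
  have hsupp : c - t • d ∈ nonnegSupportedIn (S.erase k) := by
    refine ⟨hnonneg, fun i hi => ?_⟩
    rcases eq_or_ne i k with rfl | hik
    · simp [hck]
    · have hiS : i ∉ S := fun h => hi (Finset.mem_erase.mpr ⟨hik, h⟩)
      simp [hc.2 i hiS, hdS.2 i hiS]
  obtain ⟨T, hT, c', hc', hLc'⟩ := ih _ (Finset.erase_ssubset hkS) _ hsupp
  exact ⟨T, hT, c', hc', by simp [hLc', hLd]⟩

section OrderedTopologicalVectorSpace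

variable {E : Type*} [AddCommGroup E] [PartialOrder E] [Module ℝ E] [PosSMulMono ℝ E]
  [TopologicalSpace E] [ContinuousSMul ℝ E] [OrderClosedTopology E]

theorem isSeqClosed_setOf_le_image {V : Type*} [NormedAddCommGroup V] [NormedSpace ℝ V]
    [ProperSpace V] {L : V →ₗ[ℝ] E} (hL : Continuous L) {K : Set V}
    (hK : IsClosed K) (hsmul : ∀ s : ℝ, 0 ≤ s → ∀ d ∈ K, s • d ∈ K)
    (hpointed : ∀ d ∈ K, 0 ≤ L d → d = 0) :
    IsSeqClosed {x | ∃ d ∈ K, x ≤ L d} := by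
  intro x a hx ha
  choose c hcK hxc using hx
  -- Scaling by `(1 + ‖c n‖)⁻¹` handles bounded and unbounded `c` at once: the limit `σ` of the
  -- scalars vanishes only if `‖c n‖` is unbounded, and then `d` is a nonzero element of `K`
  -- with `0 ≤ L d`.
  set s : ℕ → ℝ := fun n => (1 + ‖c n‖)⁻¹
  have hs : ∀ n, 0 < s n := fun n => by positivity
  have hs_add : ∀ n, s n + ‖s n • c n‖ = 1 := fun n => by
    rw [norm_smul, Real.norm_of_nonneg (hs n).le, ← mul_one_add, inv_mul_cancel₀ (by positivity)]
  have hmem : ∀ n, (s n, s n • c n) ∈ Set.Icc (0 : ℝ) 1 ×ˢ Metric.closedBall (0 : V) 1 :=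
    fun n => by
      have := hs_add n
      refine ⟨⟨(hs n).le, ?_⟩, ?_⟩
      · linarith [norm_nonneg (s n • c n)]
      · rw [mem_closedBall_zero_iff]; linarith [hs n]
  obtain ⟨⟨σ, d⟩, ⟨⟨hσ, -⟩, -⟩, φ, hφ, hlim⟩ :=
    (isCompact_Icc.prod (isCompact_closedBall 0 1)).tendsto_subseq hmem
  have hsφ : Tendsto (fun n => s (φ n)) atTop (𝓝 σ) := hlim.fst_nhds
  have hdφ : Tendsto (fun n => s (φ n) • c (φ n)) atTop (𝓝 d) := hlim.snd_nhds
  have hσd : σ + ‖d‖ = 1 :=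
    tendsto_nhds_unique (hsφ.add hdφ.norm) (by simp only [hs_add]; exact tendsto_const_nhds)
  have hdK : d ∈ K := hK.mem_of_tendsto hdφ
    (Eventually.of_forall fun n => hsmul _ (hs _).le _ (hcK _))
  have hσa : σ • a ≤ L d := by
    refine le_of_tendsto_of_tendsto' (hsφ.smul (ha.comp hφ.tendsto_atTop))
      ((hL.tendsto d).comp hdφ) fun n => ?_
    simp only [Function.comp_apply, map_smul]
    exact smul_le_smul_of_nonneg_left (hxc _) (hs _).le
  have hσ0 : σ ≠ 0 := by
    rintro rfl
    have := hpointed d hdK (by simpa using hσa)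
    simp [this] at hσd
  refine ⟨σ⁻¹ • d, hsmul _ (inv_nonneg.mpr hσ) d hdK, ?_⟩
  calc a = σ⁻¹ • σ • a := by rw [smul_smul, inv_mul_cancel₀ hσ0, one_smul]
    _ ≤ σ⁻¹ • L d := smul_le_smul_of_nonneg_left hσa (inv_nonneg.mpr hσ)
    _ = L (σ⁻¹ • d) := (map_smul L _ _).symm

theorem isSeqClosed_setOf_le_nonneg_image [Fintype ι] [ContinuousAdd E]
    (L : (ι → ℝ) →ₗ[ℝ] E) (hNA : ∀ c, 0 ≤ c → 0 ≤ L c → L c = 0) :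
    IsSeqClosed {x | ∃ c, 0 ≤ c ∧ x ≤ L c} := by
  intro x a hx ha
  choose c hc hxc using hx
  choose S hS c' hc' hLc' using fun n => exists_posIndepOn_eq L (hc n)
  obtain ⟨T, hT⟩ : ∃ T, ∃ᶠ n in atTop, S n = T :=
    frequently_exists.mp (Frequently.of_forall fun n => ⟨S n, rfl⟩)
  obtain ⟨φ, hφ, hφT⟩ := extraction_of_frequently_atTop hT
  have hpointed : ∀ d ∈ nonnegSupportedIn T, 0 ≤ L d → d = 0 := fun d hd hLd =>
    hS (φ 0) d (by rwa [hφT 0]) (hNA d hd.1 hLd)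
  obtain ⟨d, hd, had⟩ := isSeqClosed_setOf_le_image L.continuous_on_pi
    (isClosed_nonnegSupportedIn T) (fun _ hs _ => smul_mem_nonnegSupportedIn hs) hpointed
    (fun n => ⟨c' (φ n), hφT n ▸ hc' (φ n), hLc' (φ n) ▸ hxc (φ n)⟩)
    (ha.comp hφ.tendsto_atTop)
  exact ⟨d, hd.1, had⟩

end OrderedTopologicalVectorSpace

end FinitelyGeneratedCone

section BidAsk

variable {Ω : Type*} {m : ℕ}

noncomputable def netPayoff (g : Fin m → Ω → ℝ) (pilo pihi y : Fin m → ℝ) : Ω → ℝ :=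
  fun ω => (∑ j, y j * g j ω) - priceFn pilo pihi y

/-- Buying one unit of asset `j` at the ask price `pihi j` (`Sum.inl j`), or selling one at the
bid price `pilo j` (`Sum.inr j`). -/
def elementaryTrade (g : Fin m → Ω → ℝ) (pilo pihi : Fin m → ℝ) : Fin m ⊕ Fin m → Ω → ℝ :=
  Sum.elim (fun j ω => g j ω - pihi j) (fun j ω => pilo j - g j ω)

theorem linearCombination_elementaryTrade_posPart_negPart (g : Fin m → Ω → ℝ)
    (pilo pihi y : Fin m → ℝ) :
    Fintype.linearCombination ℝ (elementaryTrade g pilo pihi)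
      (Sum.elim (fun j => max (y j) 0) (fun j => max (-y j) 0)) = netPayoff g pilo pihi y := by
  ext ω
  simp only [Fintype.linearCombination_apply, Fintype.sum_sum_type, elementaryTrade, netPayoff,
    priceFn, Finset.sum_apply, Sum.elim_inl, Sum.elim_inr, Pi.smul_apply, smul_eq_mul,
    ← Finset.sum_add_distrib, ← Finset.sum_sub_distrib]
  refine Finset.sum_congr rfl fun j _ => ?_
  rcases le_total (y j) 0 with h | h
  · rw [max_eq_right h, max_eq_left (neg_nonneg.mpr h)]; ring
  · rw [max_eq_left h, max_eq_right (neg_nonpos.mpr h)]; ring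

theorem linearCombination_elementaryTrade_le (g : Fin m → Ω → ℝ) {pilo pihi : Fin m → ℝ}
    (hple : ∀ j, pilo j ≤ pihi j) {c : Fin m ⊕ Fin m → ℝ} (hc : 0 ≤ c) :
    Fintype.linearCombination ℝ (elementaryTrade g pilo pihi) c ≤
      netPayoff g pilo pihi (fun j => c (.inl j) - c (.inr j)) := by
  intro ω
  simp only [Fintype.linearCombination_apply, Fintype.sum_sum_type, elementaryTrade, netPayoff,
    priceFn, Finset.sum_apply, Sum.elim_inl, Sum.elim_inr, Pi.smul_apply, smul_eq_mul,
    ← Finset.sum_add_distrib, ← Finset.sum_sub_distrib]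
  refine Finset.sum_le_sum fun j _ => ?_
  have ha : 0 ≤ c (.inl j) := hc _
  have hb : 0 ≤ c (.inr j) := hc _
  have hspread : 0 ≤ pihi j - pilo j := sub_nonneg.mpr (hple j)
  rcases le_total (c (.inl j)) (c (.inr j)) with h | h
  · rw [max_eq_right (sub_nonpos.mpr h), max_eq_left (by linarith)]
    linarith [mul_nonneg ha hspread]
  · rw [max_eq_left (sub_nonneg.mpr h), max_eq_right (by linarith)]
    linarith [mul_nonneg hb hspread]

end BidAsk

theorem stmt14_general {Ω : Type*}
    (m : ℕ) (g : Fin m → Ω → ℝ)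
    (pilo pihi : Fin m → ℝ) (hple : ∀ j, pilo j ≤ pihi j)
    (hNA : ∀ y : Fin m → ℝ,
      (∀ ω, 0 ≤ (∑ j, y j * g j ω) - priceFn pilo pihi y) →
      (∀ ω, (∑ j, y j * g j ω) - priceFn pilo pihi y = 0))
    (fseq : ℕ → Ω → ℝ) (f : Ω → ℝ)
    (hmem : ∀ n, ∃ y : Fin m → ℝ, ∀ ω,
      fseq n ω ≤ (∑ j, y j * g j ω) - priceFn pilo pihi y)
    (hlim : ∀ ω, Tendsto (fun n => fseq n ω) atTop (nhds (f ω))) :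
    ∃ y : Fin m → ℝ, ∀ ω,
      f ω ≤ (∑ j, y j * g j ω) - priceFn pilo pihi y := by
  set L := Fintype.linearCombination ℝ (elementaryTrade g pilo pihi)
  have hNA' : ∀ c, 0 ≤ c → 0 ≤ L c → L c = 0 := fun c hc hLc => by
    have hle := linearCombination_elementaryTrade_le g hple hc
    exact le_antisymm (hle.trans fun ω => (hNA _ (fun ω => (hLc.trans hle) ω) ω).le) hLc
  have hmem' : ∀ n, ∃ c, 0 ≤ c ∧ fseq n ≤ L c := fun n => by
    obtain ⟨y, hy⟩ := hmem n
    refine ⟨_, ?_, (show fseq n ≤ netPayoff g pilo pihi y from hy).trans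
      (linearCombination_elementaryTrade_posPart_negPart g pilo pihi y).ge⟩
    rintro (j | j) <;> exact le_max_right _ _
  obtain ⟨c, hc, hfc⟩ :=
    isSeqClosed_setOf_le_nonneg_image L hNA' hmem' (tendsto_pi_nhds.mpr hlim)
  exact ⟨_, hfc.trans (linearCombination_elementaryTrade_le g hple hc)⟩

/-- Under the no-arbitrage assumption, the set C of payoffs super-replicable at zero
cost is closed under pointwise limits. -/
theorem stmt14 {Ω : Type*} [TopologicalSpace Ω] [PolishSpace Ω]
    [MeasurableSpace Ω] [BorelSpace Ω]
    (m : ℕ) (g : Fin m → Ω → ℝ) (hg : ∀ j, Measurable (g j))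
    (pilo pihi : Fin m → ℝ) (hple : ∀ j, pilo j ≤ pihi j)
    (hNA : ∀ y : Fin m → ℝ,
      (∀ ω, 0 ≤ (∑ j, y j * g j ω) - priceFn pilo pihi y) →
      (∀ ω, (∑ j, y j * g j ω) - priceFn pilo pihi y = 0))
    (fseq : ℕ → Ω → ℝ) (f : Ω → ℝ)
    (hmem : ∀ n, ∃ y : Fin m → ℝ, ∀ ω,
      fseq n ω ≤ (∑ j, y j * g j ω) - priceFn pilo pihi y)
    (hlim : ∀ ω, Tendsto (fun n => fseq n ω) atTop (nhds (f ω))) :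
    ∃ y : Fin m → ℝ, ∀ ω,
      f ω ≤ (∑ j, y j * g j ω) - priceFn pilo pihi y :=
  stmt14_general m g pilo pihi hple hNA fseq f hmem hlim
end

section
/- There exist Ω, payoffs g, prices, and a payoff f for which the supremum in the superhedging duality is not attained: with Ω = ℝ₊, m = 1, g₁(x) = x, f(x) = max(x−1, 0), π̲₁ = 0, π̄₁ = 1, the dual infimum φ(f) = inf{c + π(y) : c + y·x ≥ (x−1)⁺ ∀x ≥ 0} equals 1 (attained at c = 0, y = 1), but no probability measure μ on ℝ₊ with 0 ≤ ∫x dμ ≤ 1 satisfies ∫(x−1)⁺ dμ = 1. -/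
open MeasureTheory

/-- Example where the superhedging duality supremum is not attained: with g(x) = x,
f(x) = (x−1)⁺, bid 0 and ask 1, the superhedging value is 1
(attained at c = 0, y = 1), but no admissible pricing measure gives ∫ f dμ = 1. -/
theorem stmt16 :
    IsLeast {v : ℝ | ∃ c y : ℝ,
        (∀ x : ℝ, 0 ≤ x → max (x - 1) 0 ≤ c + y * x) ∧ v = c + max y 0} 1 ∧
    ¬ ∃ μ : Measure ℝ, IsProbabilityMeasure μ ∧ μ (Set.Iio 0) = 0 ∧
        Integrable id μ ∧ Integrable (fun x => max (x - 1) 0) μ ∧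
        (0 ≤ ∫ x, x ∂μ) ∧ (∫ x, x ∂μ) ≤ 1 ∧
        (∫ x, max (x - 1) 0 ∂μ) = 1 := by
  constructor
  · constructor
    · refine ⟨0, 1, fun x hx => ?_, by norm_num⟩
      exact max_le (by linarith) (by linarith)
    · rintro v ⟨c, y, hcy, rfl⟩
      have hc : 0 ≤ c := by have := hcy 0 le_rfl; simpa using this
      set t := max y 0 with ht
      by_cases h1 : 1 ≤ t
      · linarith
      · exfalso
        push_neg at h1
        have htpos : 0 < 1 - t := by linarith
        set x := (c + 2) / (1 - t) with hx
        have hx0 : 0 ≤ x := div_nonneg (by linarith) (by linarith)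
        have hmain := hcy x hx0
        have hyx : y * x ≤ t * x := mul_le_mul_of_nonneg_right (le_max_left y 0) hx0
        have h2 : x - 1 ≤ c + t * x :=
          le_trans (le_max_left _ _) (le_trans hmain (by linarith))
        have h3 : (1 - t) * x = c + 2 := by
          rw [hx]; field_simp
        nlinarith
  · rintro ⟨μ, hprob, hneg, hidInt, hfInt, _, hle, heq⟩
    have hae : ∀ᵐ x ∂μ, 0 ≤ x := by
      rw [ae_iff]
      convert hneg using 2
      ext x; simp
    have hidInt' : Integrable (fun x : ℝ => x) μ := hidInt
    set h : ℝ → ℝ := fun x => x - max (x - 1) 0 with hh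
    have hInt : Integrable h μ := hidInt'.sub hfInt
    have hnn : 0 ≤ᵐ[μ] h := by
      filter_upwards [hae] with x hx
      simp only [hh, Pi.zero_apply]
      rcases le_or_gt x 1 with h1 | h1
      · rw [max_eq_right (by linarith)]; linarith
      · rw [max_eq_left (by linarith)]; linarith
    have hsub : ∫ x, h x ∂μ = (∫ x, x ∂μ) - ∫ x, max (x - 1) 0 ∂μ :=
      integral_sub hidInt' hfInt
    have hge : 0 ≤ ∫ x, h x ∂μ := integral_nonneg_of_ae hnn
    have hint : ∫ x, h x ∂μ = 0 := by linarith
    have hzero : h =ᵐ[μ] 0 := (integral_eq_zero_iff_of_nonneg_ae hnn hInt).mp hint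
    have hfzero : (fun x : ℝ => max (x - 1) 0) =ᵐ[μ] 0 := by
      filter_upwards [hzero, hae] with x hx hx0
      simp only [hh, Pi.zero_apply] at hx ⊢
      rcases le_or_gt x 1 with h1 | h1
      · exact max_eq_right (by linarith)
      · rw [max_eq_left (by linarith)] at hx ⊢; linarith
    rw [integral_congr_ae hfzero] at heq; simp at heq
end

section
/- Let 0 < κ₁ < ⋯ < κₘ < x̄ and, for j = 1,…,J, let gⱼ : [0, x̄] → ℝ be continuous and affine on each interval [0,κ₁], [κ₁,κ₂], …, [κₘ₋₁,κₘ], [κₘ, x̄], and let πⱼ ∈ ℝ. If there exists a Borel probability measure μ on [0, x̄] whose support contains {0, κ₁, …, κₘ, x̄} and with ∫ gⱼ dμ = πⱼ for all j, then there exists a probability measure μ̂ supported exactly on {0, κ₁, …, κₘ, x̄} (i.e., a finite discrete measure giving positive mass to each of these m+2 points) with ∫ gⱼ dμ̂ = πⱼ for all j. -/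
open MeasureTheory Set Finset

/-! The tent functions `φᵢ` of the nodes form a partition of unity on `[0, x̄]` that reproduces
every function affine between consecutive nodes: `∑ᵢ φᵢ(x) g(κᵢ) = g(x)`. Integrating against `μ`,
the weights `pᵢ = ∫ φᵢ dμ` therefore sum to one and reproduce the prices, and `pᵢ > 0` because
`φᵢ` is continuous and positive at `κᵢ`, a point of the support of `μ`. -/

noncomputable def tent (a b c x : ℝ) : ℝ :=
  max 0 (min ((x - a) / (b - a)) ((c - x) / (c - b)))

section Tent

variable {a b c d x : ℝ}

theorem continuous_tent (a b c : ℝ) : Continuous (tent a b c) := by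
  unfold tent
  fun_prop

theorem tent_nonneg (a b c x : ℝ) : 0 ≤ tent a b c x := le_max_left _ _

theorem tent_le_one (hab : a < b) (hbc : b < c) (x : ℝ) : tent a b c x ≤ 1 := by
  refine max_le zero_le_one ?_
  rcases le_total x b with hx | hx
  · exact (min_le_left _ _).trans ((div_le_one (sub_pos.2 hab)).2 (by linarith))
  · exact (min_le_right _ _).trans ((div_le_one (sub_pos.2 hbc)).2 (by linarith))

theorem tent_eq_zero_of_le (hab : a < b) (hx : x ≤ a) : tent a b c x = 0 :=
  max_eq_left <| (min_le_left _ _).trans <|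
    div_nonpos_of_nonpos_of_nonneg (by linarith) (by linarith)

theorem tent_eq_zero_of_ge (hbc : b < c) (hx : c ≤ x) : tent a b c x = 0 :=
  max_eq_left <| (min_le_right _ _).trans <|
    div_nonpos_of_nonpos_of_nonneg (by linarith) (by linarith)

theorem tent_eq_of_mem_Icc_left (hab : a < b) (hbc : b < c) (hx : x ∈ Icc a b) :
    tent a b c x = (x - a) / (b - a) := by
  have hle : (x - a) / (b - a) ≤ (c - x) / (c - b) :=
    ((div_le_one (sub_pos.2 hab)).2 (by linarith [hx.2])).trans
      ((one_le_div (sub_pos.2 hbc)).2 (by linarith [hx.2]))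
  rw [tent, min_eq_left hle, max_eq_right (div_nonneg (by linarith [hx.1]) (by linarith))]

theorem tent_eq_of_mem_Icc_right (hab : a < b) (hbc : b < c) (hx : x ∈ Icc b c) :
    tent a b c x = (c - x) / (c - b) := by
  have hle : (c - x) / (c - b) ≤ (x - a) / (b - a) :=
    ((div_le_one (sub_pos.2 hbc)).2 (by linarith [hx.1])).trans
      ((one_le_div (sub_pos.2 hab)).2 (by linarith [hx.1]))
  rw [tent, min_eq_right hle, max_eq_right (div_nonneg (by linarith [hx.2]) (by linarith))]

theorem tent_apply_self (hab : a < b) (hbc : b < c) : tent a b c b = 1 := by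
  rw [tent_eq_of_mem_Icc_right hab hbc (left_mem_Icc.2 hbc.le), div_self (sub_pos.2 hbc).ne']

theorem integrable_tent {μ : Measure ℝ} [IsFiniteMeasure μ] (hab : a < b) (hbc : b < c) :
    Integrable (tent a b c) μ :=
  .of_bound (continuous_tent a b c).aestronglyMeasurable 1 <| .of_forall fun x => by
    rw [Real.norm_of_nonneg (tent_nonneg a b c x)]
    exact tent_le_one hab hbc x

theorem tent_mul_add_tent_mul_of_affine {f : ℝ → ℝ} {α β : ℝ} (hab : a < b) (hbc : b < c)
    (hcd : c < d) (hf : ∀ y ∈ Icc b c, f y = α * y + β) (hx : x ∈ Icc b c) :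
    tent a b c x * f b + tent b c d x * f c = f x := by
  rw [tent_eq_of_mem_Icc_right hab hbc hx, tent_eq_of_mem_Icc_left hbc hcd hx,
    hf b (left_mem_Icc.2 hbc.le), hf c (right_mem_Icc.2 hbc.le), hf x hx]
  field_simp [(sub_pos.2 hbc).ne']
  ring

end Tent

noncomputable def nodeTent (e : ℕ → ℝ) (n : ℕ) : ℝ → ℝ := tent (e n) (e (n + 1)) (e (n + 2))

theorem exists_mem_Icc_succ_of_mem_Icc (u : ℕ → ℝ) {x : ℝ} :
    ∀ n, x ∈ Icc (u 0) (u (n + 1)) → ∃ k ≤ n, x ∈ Icc (u k) (u (k + 1))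
  | 0, hx => ⟨0, le_rfl, hx⟩
  | n + 1, hx => by
    rcases le_total x (u (n + 1)) with hle | hge
    · obtain ⟨k, hk, hxk⟩ := exists_mem_Icc_succ_of_mem_Icc u n ⟨hx.1, hle⟩
      exact ⟨k, hk.trans n.le_succ, hxk⟩
    · exact ⟨n + 1, le_rfl, hge, hx.2⟩

theorem sum_nodeTent_mul_of_affine {e : ℕ → ℝ} (he : StrictMono e) {n : ℕ} {f : ℝ → ℝ}
    (hf : ∀ k ≤ n, ∃ α β : ℝ, ∀ y ∈ Icc (e (k + 1)) (e (k + 2)), f y = α * y + β)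
    {x : ℝ} (hx : x ∈ Icc (e 1) (e (n + 2))) :
    ∑ k ∈ range (n + 2), nodeTent e k x * f (e (k + 1)) = f x := by
  obtain ⟨k, hkn, hxk⟩ := exists_mem_Icc_succ_of_mem_Icc (fun k => e (k + 1)) n hx
  obtain ⟨α, β, hαβ⟩ := hf k hkn
  have hvanish : ∀ l ∈ range (n + 2), l ≠ k ∧ l ≠ k + 1 →
      nodeTent e l x * f (e (l + 1)) = 0 := by
    intro l _ hl
    rcases lt_or_gt_of_ne hl.1 with hlk | hkl
    · rw [nodeTent, tent_eq_zero_of_ge (he (by omega)) ((he.monotone (by omega)).trans hxk.1),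
        zero_mul]
    · rw [nodeTent, tent_eq_zero_of_le (he (by omega)) (hxk.2.trans (he.monotone (by omega))),
        zero_mul]
  rw [sum_eq_add_of_mem k (k + 1) (mem_range.2 (by omega)) (mem_range.2 (by omega))
    (by omega) hvanish]
  exact tent_mul_add_tent_mul_of_affine (he (by omega)) (he (by omega)) (he (by omega)) hαβ hxk

/-- Extra nodes on both sides make the tents at the end nodes ordinary tents. -/
theorem StrictMono.exists_nat_extension {n : ℕ} {κ : Fin (n + 1) → ℝ} (hκ : StrictMono κ) :
    ∃ e : ℕ → ℝ, StrictMono e ∧ ∀ i : Fin (n + 1), e (i + 1) = κ i := by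
  let e : ℕ → ℝ := fun k =>
    if k = 0 then κ 0 - 1
    else if h : k ≤ n + 1 then κ ⟨k - 1, by omega⟩
    else κ (Fin.last n) + (k - (n + 1) : ℕ)
  refine ⟨e, strictMono_nat_of_lt_succ fun k => ?_, fun i => ?_⟩
  · rcases Nat.lt_trichotomy k (n + 1) with hk | rfl | hk
    · rcases Nat.eq_zero_or_pos k with rfl | hk0
      · simp [e]
      · simp only [e, dif_pos hk.le, dif_pos (by omega : k + 1 ≤ n + 1), if_neg hk0.ne',
          if_neg k.succ_ne_zero]
        exact hκ (Fin.mk_lt_mk.2 (by omega))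
    · simp [e, Fin.last]
    · simp only [e, dif_neg (by omega : ¬ k ≤ n + 1), dif_neg (by omega : ¬ k + 1 ≤ n + 1),
        if_neg (by omega : k ≠ 0), if_neg (Nat.succ_ne_zero _)]
      have : k - (n + 1) < k + 1 - (n + 1) := by omega
      exact add_lt_add_right (Nat.cast_lt.2 this) _
  · simp [e, i.is_le]

theorem integral_pos_of_continuous_of_measure_ball_pos {X : Type*} [PseudoMetricSpace X]
    [MeasurableSpace X] {μ : Measure X} {φ : X → ℝ} (hφ : Continuous φ) (hφ₀ : 0 ≤ φ)
    (hφi : Integrable φ μ) {a : X} (ha : 0 < φ a) (hμ : ∀ ε > 0, 0 < μ (Metric.ball a ε)) :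
    0 < ∫ x, φ x ∂μ := by
  obtain ⟨ε, hε, hball⟩ := Metric.isOpen_iff.1 hφ.isOpen_support a ha.ne'
  exact (integral_pos_iff_support_of_nonneg hφ₀ hφi).2 ((hμ ε hε).trans_le (measure_mono hball))

theorem sum_integral_mul_eq_integral {X ι : Type*} [MeasurableSpace X] [Fintype ι]
    {μ : Measure X} {φ : ι → X → ℝ} (hφ : ∀ i, Integrable (φ i) μ) {c : ι → ℝ} {f : X → ℝ}
    (h : ∀ᵐ x ∂μ, ∑ i, φ i x * c i = f x) :
    ∑ i, (∫ x, φ i x ∂μ) * c i = ∫ x, f x ∂μ := by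
  simp_rw [← integral_mul_const]
  rw [← integral_finsetSum _ fun i _ => (hφ i).mul_const (c i)]
  exact integral_congr_ae h

theorem stmt17_general (m J : ℕ) (xbar : ℝ) (κ : Fin (m + 2) → ℝ) (hκ : StrictMono κ)
    (h0 : κ 0 = 0) (hlast : κ (Fin.last (m + 1)) = xbar)
    (g : Fin J → ℝ → ℝ)
    (hgaff : ∀ (j : Fin J) (i : Fin (m + 1)), ∃ α β : ℝ,
      ∀ x ∈ Set.Icc (κ i.castSucc) (κ i.succ), g j x = α * x + β)
    (π : Fin J → ℝ)
    (μ : Measure ℝ) [IsProbabilityMeasure μ]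
    (hμbox : μ (Set.Icc 0 xbar)ᶜ = 0)
    (hsupport : ∀ (i : Fin (m + 2)) (ε : ℝ), 0 < ε → 0 < μ (Metric.ball (κ i) ε))
    (hint : ∀ j, ∫ x, g j x ∂μ = π j) :
    ∃ p : Fin (m + 2) → ℝ, (∀ i, 0 < p i) ∧ (∑ i, p i) = 1 ∧
      ∀ j, (∑ i, p i * g j (κ i)) = π j := by
  obtain ⟨e, he, heκ⟩ := hκ.exists_nat_extension
  let φ (i : Fin (m + 2)) : ℝ → ℝ := nodeTent e i
  have hφ_int (i : Fin (m + 2)) : Integrable (φ i) μ :=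
    integrable_tent (he (by omega)) (he (by omega))
  have hinterp (f : ℝ → ℝ) (hf : ∀ i : Fin (m + 1), ∃ α β : ℝ,
      ∀ x ∈ Icc (κ i.castSucc) (κ i.succ), f x = α * x + β) :
      ∀ᵐ x ∂μ, ∑ i, φ i x * f (κ i) = f x := by
    filter_upwards [mem_ae_iff.2 hμbox] with x hx
    simp_rw [φ, ← heκ, Fin.sum_univ_eq_sum_range fun k => nodeTent e k x * f (e (k + 1))]
    refine sum_nodeTent_mul_of_affine he (fun k hk => ?_) ?_
    · simpa [← heκ] using hf ⟨k, by omega⟩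
    · have he_last : e (m + 2) = κ (Fin.last _) := by simpa using heκ (Fin.last _)
      rwa [show e 1 = κ 0 from heκ 0, he_last, h0, hlast]
  refine ⟨fun i => ∫ x, φ i x ∂μ, fun i => ?_, ?_, fun j => ?_⟩
  · refine integral_pos_of_continuous_of_measure_ball_pos (continuous_tent _ _ _)
      (tent_nonneg _ _ _) (hφ_int i) ?_ (hsupport i)
    dsimp only [φ, nodeTent]
    rw [← heκ, tent_apply_self (he (by omega)) (he (by omega))]
    exact one_pos
  · simpa using
      sum_integral_mul_eq_integral hφ_int (hinterp (fun _ => 1) fun _ => ⟨0, 1, by simp⟩)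
  · rw [← hint j]
    exact sum_integral_mul_eq_integral hφ_int (hinterp (g j) (hgaff j))

/-- If a probability measure on [0, x̄] whose support contains the breakpoints
0 = κ₀ < κ₁ < ⋯ < κₘ < κₘ₊₁ = x̄ reproduces the prices of finitely many payoffs
that are continuous and piecewise affine between consecutive breakpoints, then a
discrete measure supported exactly on the breakpoints reproduces the same prices. -/
theorem stmt17 (m J : ℕ) (xbar : ℝ) (κ : Fin (m + 2) → ℝ) (hκ : StrictMono κ)
    (h0 : κ 0 = 0) (hlast : κ (Fin.last (m + 1)) = xbar)
    (g : Fin J → ℝ → ℝ) (hgc : ∀ j, ContinuousOn (g j) (Set.Icc 0 xbar))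
    (hgaff : ∀ (j : Fin J) (i : Fin (m + 1)), ∃ α β : ℝ,
      ∀ x ∈ Set.Icc (κ i.castSucc) (κ i.succ), g j x = α * x + β)
    (π : Fin J → ℝ)
    (μ : Measure ℝ) [IsProbabilityMeasure μ]
    (hμbox : μ (Set.Icc 0 xbar)ᶜ = 0)
    (hsupport : ∀ (i : Fin (m + 2)) (ε : ℝ), 0 < ε → 0 < μ (Metric.ball (κ i) ε))
    (hint : ∀ j, ∫ x, g j x ∂μ = π j) :
    ∃ p : Fin (m + 2) → ℝ, (∀ i, 0 < p i) ∧ (∑ i, p i) = 1 ∧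
      ∀ j, (∑ i, p i * g j (κ i)) = π j :=
  stmt17_general m J xbar κ hκ h0 hlast g hgaff π μ hμbox hsupport hint
end

section
/- Let 0 < κ₁ < ⋯ < κₘ < x̄ and suppose there is a probability measure μ on [0, x̄] whose support contains {0, κ₁,…,κₘ, x̄} and such that the call and put prices are consistent: π̲ⱼᶜ ≤ ∫(x−κⱼ)⁺ dμ ≤ π̄ⱼᶜ and π̲ⱼᵖ ≤ ∫(κⱼ−x)⁺ dμ ≤ π̄ⱼᵖ for all j, where π̲ⱼᶜ < π̄ⱼᶜ and π̲ⱼᵖ < π̄ⱼᵖ. Then no arbitrage exists among these options: for any portfolio weights (yⱼᶜ, yⱼᵖ)ⱼ for which the payoff Σⱼ[yⱼᶜ(x−κⱼ)⁺ + yⱼᵖ(κⱼ−x)⁺] minus the portfolio price π(y) = Σⱼ[(yⱼᶜ∨0)π̄ⱼᶜ − ((−yⱼᶜ)∨0)π̲ⱼᶜ + (yⱼᵖ∨0)π̄ⱼᵖ − ((−yⱼᵖ)∨0)π̲ⱼᵖ] is nonnegative for all x ∈ ℝ₊, it is identically zero on ℝ₊. -/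
/-!
Write `h` for the payoff minus the price of the portfolio. Price consistency gives `∫ h dμ ≤ 0`,
while `h ≥ 0` on `[0, x̄]`, which carries `μ`; so `h = 0` `μ`-a.e., and by continuity `h`
vanishes at every point of the support of `μ`, in particular at `0`, at the strikes and at `x̄`.
On every interval containing no strike in its interior `h` is affine, and each such interval
around a given `x ≥ 0` can be chosen to contain two of these zeros, so `h x = 0`.
-/

open MeasureTheory Set Topology

section

variable {𝕜 ι : Type*} [Field 𝕜]

def IsAffineOn (f : 𝕜 → 𝕜) (s : Set 𝕜) : Prop :=
  ∃ α β : 𝕜, ∀ x ∈ s, f x = α * x + β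

namespace IsAffineOn

variable {f g : 𝕜 → 𝕜} {s : Set 𝕜}

lemma const (c : 𝕜) : IsAffineOn (fun _ ↦ c) s := ⟨0, c, by simp⟩

lemma add (hf : IsAffineOn f s) (hg : IsAffineOn g s) : IsAffineOn (fun x ↦ f x + g x) s := by
  obtain ⟨α, β, hf⟩ := hf
  obtain ⟨α', β', hg⟩ := hg
  exact ⟨α + α', β + β', fun x hx ↦ by simp only [hf x hx, hg x hx]; ring⟩

lemma sub (hf : IsAffineOn f s) (hg : IsAffineOn g s) : IsAffineOn (fun x ↦ f x - g x) s := by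
  obtain ⟨α, β, hf⟩ := hf
  obtain ⟨α', β', hg⟩ := hg
  exact ⟨α - α', β - β', fun x hx ↦ by simp only [hf x hx, hg x hx]; ring⟩

lemma const_mul (c : 𝕜) (hf : IsAffineOn f s) : IsAffineOn (fun x ↦ c * f x) s := by
  obtain ⟨α, β, hf⟩ := hf
  exact ⟨c * α, c * β, fun x hx ↦ by simp only [hf x hx]; ring⟩

lemma sum {t : Finset ι} {f : ι → 𝕜 → 𝕜} (hf : ∀ i ∈ t, IsAffineOn (f i) s) :
    IsAffineOn (fun x ↦ ∑ i ∈ t, f i x) s := by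
  classical
  induction t using Finset.induction_on with
  | empty => simpa using const 0
  | insert i t hi ih =>
    simp_rw [Finset.sum_insert hi]
    exact (hf i (t.mem_insert_self i)).add (ih fun j hj ↦ hf j (Finset.mem_insert_of_mem hj))

lemma eq_zero_of_eq_zero_of_eq_zero (hf : IsAffineOn f s) {p q : 𝕜} (hp : p ∈ s) (hq : q ∈ s)
    (hpq : p ≠ q) (hfp : f p = 0) (hfq : f q = 0) {x : 𝕜} (hx : x ∈ s) : f x = 0 := by
  obtain ⟨α, β, hf⟩ := hf
  rw [hf p hp] at hfp
  rw [hf q hq] at hfq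
  have hα : α = 0 :=
    (mul_eq_zero.1 (by linear_combination hfp - hfq : α * (p - q) = 0)).resolve_right
      (sub_ne_zero.2 hpq)
  rw [hf x hx, hα]
  linear_combination hfp - p * hα

end IsAffineOn

variable [LinearOrder 𝕜]

lemma eq_zero_of_isAffineOn_gaps {K : Finset 𝕜} {f : 𝕜 → 𝕜}
    (hf : ∀ s t, (∀ k ∈ K, k ≤ s ∨ t ≤ k) → IsAffineOn f (Icc s t))
    (hK : ∀ k ∈ K, f k = 0) {a b : 𝕜} (hab : a < b) (haK : ∀ k ∈ K, a < k) (hKb : ∀ k ∈ K, k < b)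
    (ha : f a = 0) (hb : f b = 0) (x : 𝕜) : f x = 0 := by
  set L := (insert a K).filter (· ≤ x)
  set U := (insert b K).filter (x < ·)
  have hL : ∀ z ∈ L, f z = 0 ∧ z ≤ x ∧ z < b := by
    simp only [L, Finset.mem_filter, Finset.mem_insert]
    rintro z ⟨rfl | hz, hzx⟩
    exacts [⟨ha, hzx, hab⟩, ⟨hK z hz, hzx, hKb z hz⟩]
  have hU : ∀ z ∈ U, f z = 0 ∧ x < z ∧ a < z := by
    simp only [U, Finset.mem_filter, Finset.mem_insert]
    rintro z ⟨rfl | hz, hxz⟩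
    exacts [⟨hb, hxz, hab⟩, ⟨hK z hz, hxz, haK z hz⟩]
  have hLmax (hLne : L.Nonempty) (k : 𝕜) (hk : k ∈ K) (hkx : k ≤ x) : k ≤ L.max' hLne :=
    L.le_max' k (by simp [L, hk, hkx])
  have hUmin (hUne : U.Nonempty) (k : 𝕜) (hk : k ∈ K) (hxk : x < k) : U.min' hUne ≤ k :=
    U.min'_le k (by simp [U, hk, hxk])
  by_cases hLne : L.Nonempty
  · obtain ⟨hs0, hsx, hsb⟩ := hL _ (L.max'_mem hLne)
    by_cases hUne : U.Nonempty
    · obtain ⟨ht0, hxt, -⟩ := hU _ (U.min'_mem hUne)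
      refine (hf (L.max' hLne) (U.min' hUne) fun k hk ↦ ?_).eq_zero_of_eq_zero_of_eq_zero
        (left_mem_Icc.2 (hsx.trans hxt.le)) (right_mem_Icc.2 (hsx.trans hxt.le))
        (hsx.trans_lt hxt).ne hs0 ht0 ⟨hsx, hxt.le⟩
      rcases le_or_gt k x with hkx | hxk
      exacts [.inl (hLmax hLne k hk hkx), .inr (hUmin hUne k hk hxk)]
    · have hbx : b ≤ x := not_lt.1 fun hxb ↦ hUne ⟨b, by simp [U, hxb]⟩
      refine (hf (L.max' hLne) x fun k hk ↦ ?_).eq_zero_of_eq_zero_of_eq_zero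
        (left_mem_Icc.2 hsx) ⟨hsb.le, hbx⟩ hsb.ne hs0 hb (right_mem_Icc.2 hsx)
      exact .inl (hLmax hLne k hk ((hKb k hk).le.trans hbx))
  · have hxa : x < a := not_le.1 fun hax ↦ hLne ⟨a, by simp [L, hax]⟩
    have hUne : U.Nonempty := ⟨b, by simp [U, hxa.trans hab]⟩
    obtain ⟨ht0, hxt, hat⟩ := hU _ (U.min'_mem hUne)
    refine (hf x (U.min' hUne) fun k hk ↦ ?_).eq_zero_of_eq_zero_of_eq_zero
      ⟨hxa.le, hat.le⟩ (right_mem_Icc.2 hxt.le) hat.ne ha ht0 (left_mem_Icc.2 hxt.le)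
    exact .inr (hUmin hUne k hk (hxa.trans (haK k hk)))

variable [IsStrictOrderedRing 𝕜]

lemma isAffineOn_max_sub_const {k s t : 𝕜} (hk : k ≤ s ∨ t ≤ k) :
    IsAffineOn (fun x ↦ max (x - k) 0) (Icc s t) := by
  rcases hk with hk | hk
  · exact ⟨1, -k, fun x hx ↦ by simp only [max_eq_left (sub_nonneg.2 (hk.trans hx.1))]; ring⟩
  · exact ⟨0, 0, fun x hx ↦ by simp only [max_eq_right (sub_nonpos.2 (hx.2.trans hk))]; ring⟩

lemma isAffineOn_max_const_sub {k s t : 𝕜} (hk : k ≤ s ∨ t ≤ k) :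
    IsAffineOn (fun x ↦ max (k - x) 0) (Icc s t) := by
  rcases hk with hk | hk
  · exact ⟨0, 0, fun x hx ↦ by simp only [max_eq_right (sub_nonpos.2 (hk.trans hx.1))]; ring⟩
  · exact ⟨-1, k, fun x hx ↦ by simp only [max_eq_left (sub_nonneg.2 (hx.2.trans hk))]; ring⟩

lemma mul_le_max_mul_sub_max_neg_mul {y c bid ask : 𝕜} (hc : c ∈ Icc bid ask) :
    y * c ≤ max y 0 * ask - max (-y) 0 * bid := by
  rcases le_total 0 y with hy | hy
  · rw [max_eq_left hy, max_eq_right (neg_nonpos.2 hy)]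
    simpa using mul_le_mul_of_nonneg_left hc.2 hy
  · rw [max_eq_right hy, max_eq_left (neg_nonneg.2 hy)]
    simpa using mul_le_mul_of_nonpos_left hc.1 hy

end

lemma Continuous.eq_zero_of_ae_eq_zero_of_mem_support {X E : Type*} [TopologicalSpace X]
    [MeasurableSpace X] [TopologicalSpace E] [T1Space E] [Zero E] {μ : Measure X} {f : X → E}
    (hf : Continuous f) (h0 : f =ᵐ[μ] 0) {x : X} (hx : x ∈ μ.support) : f x = 0 := by
  by_contra hfx
  have hU : {y | f y ≠ 0} ∈ 𝓝 x := (isOpen_ne.preimage hf).mem_nhds hfx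
  exact ((Measure.mem_support_iff_forall x).1 hx _ hU).ne' (ae_iff.1 h0)

lemma Continuous.integrable_of_ae_mem_compact {X E : Type*} [TopologicalSpace X]
    [MeasurableSpace X] [OpensMeasurableSpace X] [T2Space X] [NormedAddCommGroup E]
    {μ : Measure X} [IsFiniteMeasure μ] {K : Set X} (hK : IsCompact K) (hμK : ∀ᵐ x ∂μ, x ∈ K)
    {f : X → E} (hf : Continuous f) : Integrable f μ := by
  simpa [IntegrableOn, Measure.restrict_eq_self_of_ae_mem hμK] using
    hf.continuousOn.integrableOn_compact (μ := μ) hK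

section Portfolio

variable {ι : Type*} [Fintype ι]

def portfolioPayoff (κ yc yp : ι → ℝ) (x : ℝ) : ℝ :=
  ∑ j, (yc j * max (x - κ j) 0 + yp j * max (κ j - x) 0)

def portfolioPrice (yc yp bidc askc bidp askp : ι → ℝ) : ℝ :=
  ∑ j, (max (yc j) 0 * askc j - max (-(yc j)) 0 * bidc j
    + max (yp j) 0 * askp j - max (-(yp j)) 0 * bidp j)

variable (κ yc yp : ι → ℝ)

@[fun_prop]
lemma continuous_portfolioPayoff : Continuous (portfolioPayoff κ yc yp) := by
  unfold portfolioPayoff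
  fun_prop

lemma isAffineOn_portfolioPayoff {s t : ℝ} (hκ : ∀ j, κ j ≤ s ∨ t ≤ κ j) :
    IsAffineOn (portfolioPayoff κ yc yp) (Icc s t) :=
  IsAffineOn.sum fun j _ ↦ ((isAffineOn_max_sub_const (hκ j)).const_mul (yc j)).add
    ((isAffineOn_max_const_sub (hκ j)).const_mul (yp j))

lemma integral_portfolioPayoff_le_portfolioPrice {μ : Measure ℝ} [IsFiniteMeasure μ]
    {K : Set ℝ} (hK : IsCompact K) (hμK : ∀ᵐ x ∂μ, x ∈ K) {bidc askc bidp askp : ι → ℝ}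
    (hpc : ∀ j, ∫ x, max (x - κ j) 0 ∂μ ∈ Icc (bidc j) (askc j))
    (hpp : ∀ j, ∫ x, max (κ j - x) 0 ∂μ ∈ Icc (bidp j) (askp j)) :
    ∫ x, portfolioPayoff κ yc yp x ∂μ ≤ portfolioPrice yc yp bidc askc bidp askp := by
  have hcall (j : ι) : Integrable (fun x ↦ max (x - κ j) 0) μ :=
    (by fun_prop : Continuous _).integrable_of_ae_mem_compact hK hμK
  have hput (j : ι) : Integrable (fun x ↦ max (κ j - x) 0) μ :=
    (by fun_prop : Continuous _).integrable_of_ae_mem_compact hK hμK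
  have hterm (j : ι) :
      Integrable (fun x ↦ yc j * max (x - κ j) 0 + yp j * max (κ j - x) 0) μ :=
    ((hcall j).const_mul (yc j)).add ((hput j).const_mul (yp j))
  unfold portfolioPayoff
  rw [integral_finsetSum _ fun j _ ↦ hterm j]
  refine Finset.sum_le_sum fun j _ ↦ ?_
  rw [integral_add ((hcall j).const_mul _) ((hput j).const_mul _), integral_const_mul,
    integral_const_mul]
  linarith [mul_le_max_mul_sub_max_neg_mul (y := yc j) (hpc j),
    mul_le_max_mul_sub_max_neg_mul (y := yp j) (hpp j)]

end Portfolio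

theorem stmt18_general (m : ℕ) (xbar : ℝ) (κ : Fin m → ℝ)
    (hκpos : ∀ j, 0 < κ j) (hκlt : ∀ j, κ j < xbar)
    (bidc askc bidp askp : Fin m → ℝ)
    (μ : Measure ℝ) [IsProbabilityMeasure μ]
    (hμbox : μ (Set.Icc 0 xbar)ᶜ = 0)
    (hs0 : ∀ ε : ℝ, 0 < ε → 0 < μ (Metric.ball 0 ε))
    (hsx : ∀ ε : ℝ, 0 < ε → 0 < μ (Metric.ball xbar ε))
    (hsk : ∀ j, ∀ ε : ℝ, 0 < ε → 0 < μ (Metric.ball (κ j) ε))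
    (hpc : ∀ j, bidc j ≤ ∫ x, max (x - κ j) 0 ∂μ ∧
      ∫ x, max (x - κ j) 0 ∂μ ≤ askc j)
    (hpp : ∀ j, bidp j ≤ ∫ x, max (κ j - x) 0 ∂μ ∧
      ∫ x, max (κ j - x) 0 ∂μ ≤ askp j) :
    ∀ yc yp : Fin m → ℝ,
      (∀ x : ℝ, 0 ≤ x →
        0 ≤ (∑ j, (yc j * max (x - κ j) 0 + yp j * max (κ j - x) 0)) -
          ∑ j, (max (yc j) 0 * askc j - max (-(yc j)) 0 * bidc j
              + max (yp j) 0 * askp j - max (-(yp j)) 0 * bidp j)) →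
      ∀ x : ℝ, 0 ≤ x →
        (∑ j, (yc j * max (x - κ j) 0 + yp j * max (κ j - x) 0)) -
          ∑ j, (max (yc j) 0 * askc j - max (-(yc j)) 0 * bidc j
              + max (yp j) 0 * askp j - max (-(yp j)) 0 * bidp j) = 0 := by
  intro yc yp hnonneg
  rcases isEmpty_or_nonempty (Fin m) with hm | ⟨⟨j₀⟩⟩
  · simp
  set h := fun x ↦ portfolioPayoff κ yc yp x - portfolioPrice yc yp bidc askc bidp askp
  have hbox : ∀ᵐ x ∂μ, x ∈ Icc 0 xbar :=
    (measure_eq_zero_iff_ae_notMem.1 hμbox).mono fun _ ↦ not_not.1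
  have hnonneg_ae : 0 ≤ᵐ[μ] h := hbox.mono fun x hx ↦ hnonneg x hx.1
  have hpayoff : Integrable (portfolioPayoff κ yc yp) μ :=
    (continuous_portfolioPayoff κ yc yp).integrable_of_ae_mem_compact isCompact_Icc hbox
  have hint : Integrable h μ := hpayoff.sub (integrable_const _)
  have hle : ∫ x, h x ∂μ ≤ 0 := by
    simp only [h]
    rw [integral_sub hpayoff (integrable_const _), integral_const, sub_nonpos]
    simpa using integral_portfolioPayoff_le_portfolioPrice κ yc yp isCompact_Icc hbox hpc hpp
  have hzero : h =ᵐ[μ] 0 := (integral_eq_zero_iff_of_nonneg_ae hnonneg_ae hint).1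
    (hle.antisymm (integral_nonneg_of_ae hnonneg_ae))
  have hsupp (p : ℝ) (hp : ∀ ε : ℝ, 0 < ε → 0 < μ (Metric.ball p ε)) : h p = 0 :=
    (by fun_prop : Continuous h).eq_zero_of_ae_eq_zero_of_mem_support hzero
      (Metric.nhds_basis_ball.mem_measureSupport.2 hp)
  refine fun x _ ↦ eq_zero_of_isAffineOn_gaps (K := Finset.univ.image κ)
    (fun s t hK ↦ (isAffineOn_portfolioPayoff κ yc yp fun j ↦ hK _ (by simp)).sub (.const _))
    ?_ ((hκpos j₀).trans (hκlt j₀)) ?_ ?_ (hsupp 0 hs0) (hsupp xbar hsx) x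
  · simpa using fun j ↦ hsupp (κ j) (hsk j)
  · simpa using hκpos
  · simpa using hκlt

/-- If call and put prices (with bid < ask) at strikes 0 < κ₁ < ⋯ < κₘ < x̄ are
consistent with a probability measure on [0,x̄] whose support contains 0, the
strikes, and x̄, then any portfolio whose payoff minus price is nonnegative on ℝ₊
has payoff minus price identically zero on ℝ₊ (no arbitrage). -/
theorem stmt18 (m : ℕ) (xbar : ℝ) (κ : Fin m → ℝ) (hκ : StrictMono κ)
    (hκpos : ∀ j, 0 < κ j) (hκlt : ∀ j, κ j < xbar)
    (bidc askc bidp askp : Fin m → ℝ)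
    (hc : ∀ j, bidc j < askc j) (hp : ∀ j, bidp j < askp j)
    (μ : Measure ℝ) [IsProbabilityMeasure μ]
    (hμbox : μ (Set.Icc 0 xbar)ᶜ = 0)
    (hs0 : ∀ ε : ℝ, 0 < ε → 0 < μ (Metric.ball 0 ε))
    (hsx : ∀ ε : ℝ, 0 < ε → 0 < μ (Metric.ball xbar ε))
    (hsk : ∀ j, ∀ ε : ℝ, 0 < ε → 0 < μ (Metric.ball (κ j) ε))
    (hpc : ∀ j, bidc j ≤ ∫ x, max (x - κ j) 0 ∂μ ∧
      ∫ x, max (x - κ j) 0 ∂μ ≤ askc j)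
    (hpp : ∀ j, bidp j ≤ ∫ x, max (κ j - x) 0 ∂μ ∧
      ∫ x, max (κ j - x) 0 ∂μ ≤ askp j) :
    ∀ yc yp : Fin m → ℝ,
      (∀ x : ℝ, 0 ≤ x →
        0 ≤ (∑ j, (yc j * max (x - κ j) 0 + yp j * max (κ j - x) 0)) -
          ∑ j, (max (yc j) 0 * askc j - max (-(yc j)) 0 * bidc j
              + max (yp j) 0 * askp j - max (-(yp j)) 0 * bidp j)) →
      ∀ x : ℝ, 0 ≤ x →
        (∑ j, (yc j * max (x - κ j) 0 + yp j * max (κ j - x) 0)) -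
          ∑ j, (max (yc j) 0 * askc j - max (-(yc j)) 0 * bidc j
              + max (yp j) 0 * askp j - max (-(yp j)) 0 * bidp j) = 0 :=
  stmt18_general m xbar κ hκpos hκlt bidc askc bidp askp μ hμbox hs0 hsx hsk hpc hpp
end
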